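/- arXiv:0805.0749 — 5 statements merged into one kernel-verified Lean document; each statement's English description precedes it below -/
import Mathlib

section
/- Let Q < 0 be a real constant. There is no smooth function u : ℝ² → ℝ satisfying -Δu = Q e^{2u} on ℝ² together with ∫_{ℝ²} e^{2u(x)} dx < +∞. -/
open MeasureTheory Real Filter Topology

/-- The Euclidean Laplacian (sum of second partial derivatives) on `ℝ^n`. -/
noncomputable def lap {n : ℕ} (f : EuclideanSpace ℝ (Fin n) → ℝ) :
    EuclideanSpace ℝ (Fin n) → ℝ := fun x =>
  ∑ i : Fin n, iteratedFDeriv ℝ 2 f x ![EuclideanSpace.single i 1, EuclideanSpace.single i 1]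

/-- `p` is the evaluation of a real polynomial in `n` variables of total degree at most `d`. -/
def IsPolyOfDegLE {n : ℕ} (p : EuclideanSpace ℝ (Fin n) → ℝ) (d : ℕ) : Prop :=
  ∃ P : MvPolynomial (Fin n) ℝ, P.totalDegree ≤ d ∧
    ∀ x, p x = MvPolynomial.eval (fun i => x i) P

/-- The `k`-dimensional volume of the unit sphere `S^k ⊆ ℝ^{k+1}`,
computed as `(k+1)` times the volume of the unit ball in `ℝ^{k+1}`. -/
noncomputable def sphereVol (k : ℕ) : ℝ :=
  ((k + 1 : ℕ) : ℝ) * (volume (Metric.ball (0 : EuclideanSpace ℝ (Fin (k + 1))) 1)).toReal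

/-- The constant `γ_m = |S^{2m-1}| 2^{2m-2} ((m-1)!)²`. -/
noncomputable def gammaConst (m : ℕ) : ℝ :=
  sphereVol (2 * m - 1) * 2 ^ (2 * m - 2) * ((m - 1).factorial : ℝ) ^ 2

/-- `u` is a solution of `(-Δ)^m u = Q e^{2mu}` on `ℝ^{2m}` with `∫ e^{2mu} < ∞`. -/
def IsSolution (m : ℕ) (Q : ℝ) (u : EuclideanSpace ℝ (Fin (2 * m)) → ℝ) : Prop :=
  ContDiff ℝ (⊤ : ℕ∞) u ∧
  (∀ x, (-1 : ℝ) ^ m * (lap^[m] u) x = Q * Real.exp (2 * (m : ℝ) * u x)) ∧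
  Integrable (fun x => Real.exp (2 * (m : ℝ) * u x))

/-- `α = |S^{2m}|⁻¹ ∫_{ℝ^{2m}} e^{2mu}`. -/
noncomputable def solAlpha (m : ℕ) (u : EuclideanSpace ℝ (Fin (2 * m)) → ℝ) : ℝ :=
  (1 / sphereVol (2 * m)) * ∫ x, Real.exp (2 * (m : ℝ) * u x)

/-- The auxiliary function `v(x) = -((2m-1)!/γ_m) ∫ log(|y|/|x-y|) e^{2mu(y)} dy`. -/
noncomputable def vAux (m : ℕ) (u : EuclideanSpace ℝ (Fin (2 * m)) → ℝ) :
    EuclideanSpace ℝ (Fin (2 * m)) → ℝ := fun x =>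
  -(((2 * m - 1).factorial : ℝ) / gammaConst m) *
    ∫ y, Real.log (‖y‖ / ‖x - y‖) * Real.exp (2 * (m : ℝ) * u y)
namespace NoSolAux

open Set

noncomputable section

abbrev E2 := EuclideanSpace ℝ (Fin 2)

def e1 : E2 := EuclideanSpace.single 0 1
def e2 : E2 := EuclideanSpace.single 1 1

def Om (θ : ℝ) : E2 := cos θ • e1 + sin θ • e2
def Ta (θ : ℝ) : E2 := (-sin θ) • e1 + cos θ • e2
def P (s θ : ℝ) : E2 := (s * cos θ) • e1 + (s * sin θ) • e2

lemma hasDerivAt_P_s (s θ : ℝ) : HasDerivAt (fun s' => P s' θ) (Om θ) s := by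
  have h1 : HasDerivAt (fun s' : ℝ => (s' * cos θ) • e1) (cos θ • e1) s :=
    (hasDerivAt_mul_const (cos θ)).smul_const e1
  have h2 : HasDerivAt (fun s' : ℝ => (s' * sin θ) • e2) (sin θ • e2) s :=
    (hasDerivAt_mul_const (sin θ)).smul_const e2
  exact h1.add h2

lemma hasDerivAt_P_theta (s θ : ℝ) : HasDerivAt (fun θ' => P s θ') (s • Ta θ) θ := by
  have h1 : HasDerivAt (fun θ' : ℝ => (s * cos θ') • e1) ((s * (-sin θ)) • e1) θ :=
    ((Real.hasDerivAt_cos θ).const_mul s).smul_const e1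
  have h2 : HasDerivAt (fun θ' : ℝ => (s * sin θ') • e2) ((s * cos θ) • e2) θ :=
    ((Real.hasDerivAt_sin θ).const_mul s).smul_const e2
  have := h1.add h2
  have heq : (s * -sin θ) • e1 + (s * cos θ) • e2 = s • Ta θ := by
    rw [Ta, smul_add, smul_smul, smul_smul]
  rwa [heq] at this

lemma hasDerivAt_Ta (θ : ℝ) : HasDerivAt Ta (-Om θ) θ := by
  have h1 : HasDerivAt (fun θ' : ℝ => (-sin θ') • e1) ((-cos θ) • e1) θ :=
    ((Real.hasDerivAt_sin θ).neg).smul_const e1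
  have h2 : HasDerivAt (fun θ' : ℝ => cos θ' • e2) ((-sin θ) • e2) θ :=
    (Real.hasDerivAt_cos θ).smul_const e2
  have := h1.add h2
  have heq : (-cos θ) • e1 + (-sin θ) • e2 = -Om θ := by
    rw [Om, neg_add, neg_smul, neg_smul]
  rwa [heq] at this

variable {u : E2 → ℝ}

def G (u : E2 → ℝ) : E2 → (E2 →L[ℝ] ℝ) := fderiv ℝ u
def H (u : E2 → ℝ) : E2 → (E2 →L[ℝ] (E2 →L[ℝ] ℝ)) := fderiv ℝ (G u)

lemma contDiff_G (hu : ContDiff ℝ (⊤ : ℕ∞) u) : ContDiff ℝ (⊤ : ℕ∞) (G u) := ContDiff.fderiv_right (m := (⊤ : ℕ∞)) hu (by simp)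

lemma hG (hu : ContDiff ℝ (⊤ : ℕ∞) u) (x : E2) : HasFDerivAt u (G u x) x :=
  (hu.differentiable (by simp) x).hasFDerivAt

lemma hH (hu : ContDiff ℝ (⊤ : ℕ∞) u) (x : E2) : HasFDerivAt (G u) (H u x) x :=
  ((contDiff_G hu).differentiable (by simp) x).hasFDerivAt

lemma cont_H (hu : ContDiff ℝ (⊤ : ℕ∞) u) : Continuous (H u) := (ContDiff.fderiv_right (m := (⊤ : ℕ∞)) (contDiff_G hu) (by simp)).continuous

lemma cont_G (hu : ContDiff ℝ (⊤ : ℕ∞) u) : Continuous (G u) := (contDiff_G hu).continuous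

lemma lap_eq (x : E2) : lap u x = H u x e1 e1 + H u x e2 e2 := by
  simp only [lap, Fin.sum_univ_two, iteratedFDeriv_two_apply, Matrix.cons_val_zero,
    Matrix.cons_val_one, Matrix.head_cons]
  rfl

lemma H_rot (x : E2) (θ : ℝ) :
    H u x (Om θ) (Om θ) + H u x (Ta θ) (Ta θ) = H u x e1 e1 + H u x e2 e2 := by
  simp only [Om, Ta, _root_.map_add, _root_.map_smul, ContinuousLinearMap.add_apply,
    ContinuousLinearMap.coe_smul', Pi.smul_apply, smul_eq_mul]
  linear_combination (Real.sin_sq_add_cos_sq θ) * (H u x e1 e1 + H u x e2 e2)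

section

variable {u : E2 → ℝ} (hu : ContDiff ℝ (⊤ : ℕ∞) u)

lemma cont_P : Continuous fun p : ℝ × ℝ => P p.1 p.2 := by
  apply Continuous.add
  · exact (continuous_fst.mul (Real.continuous_cos.comp continuous_snd)).smul continuous_const
  · exact (continuous_fst.mul (Real.continuous_sin.comp continuous_snd)).smul continuous_const

lemma cont_Om : Continuous Om :=
  (Real.continuous_cos.smul continuous_const).add (Real.continuous_sin.smul continuous_const)

lemma cont_Ta : Continuous Ta :=
  (Real.continuous_sin.neg.smul continuous_const).add (Real.continuous_cos.smul continuous_const)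

include hu

lemma hd_uP (s θ : ℝ) : HasDerivAt (fun s' => u (P s' θ)) (G u (P s θ) (Om θ)) s :=
  (hG hu (P s θ)).comp_hasDerivAt s (hasDerivAt_P_s s θ)

lemma hd_GP_s (s θ : ℝ) :
    HasDerivAt (fun s' => G u (P s' θ) (Om θ)) (H u (P s θ) (Om θ) (Om θ)) s := by
  have hc : HasDerivAt (fun s' => G u (P s' θ)) (H u (P s θ) (Om θ)) s :=
    (hH hu (P s θ)).comp_hasDerivAt s (hasDerivAt_P_s s θ)
  have := hc.clm_apply (hasDerivAt_const s (Om θ))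
  simpa using this

lemma hd_V (s θ : ℝ) : HasDerivAt (fun s' => s' * G u (P s' θ) (Om θ))
    (G u (P s θ) (Om θ) + s * H u (P s θ) (Om θ) (Om θ)) s := by
  have := (hasDerivAt_id s).mul (hd_GP_s hu s θ)
  simpa [Pi.mul_def] using this

lemma hd_B (s θ : ℝ) : HasDerivAt (fun θ' => G u (P s θ') (Ta θ'))
    (s * H u (P s θ) (Ta θ) (Ta θ) - G u (P s θ) (Om θ)) θ := by
  have hc : HasDerivAt (fun θ' => G u (P s θ')) (H u (P s θ) (s • Ta θ)) θ :=
    (hH hu (P s θ)).comp_hasDerivAt θ (hasDerivAt_P_theta s θ)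
  have h2 := hc.clm_apply (hasDerivAt_Ta θ)
  have heq : H u (P s θ) (s • Ta θ) (Ta θ) + G u (P s θ) (-Om θ)
      = s * H u (P s θ) (Ta θ) (Ta θ) - G u (P s θ) (Om θ) := by
    rw [_root_.map_smul, _root_.map_neg]
    simp [sub_eq_add_neg]
  rwa [heq] at h2

lemma cont_integrand_B : Continuous fun p : ℝ × ℝ =>
    p.1 * H u (P p.1 p.2) (Ta p.2) (Ta p.2) - G u (P p.1 p.2) (Om p.2) := by
  have hHc : Continuous fun p : ℝ × ℝ => H u (P p.1 p.2) (Ta p.2) (Ta p.2) :=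
    (((cont_H hu).comp cont_P).clm_apply (cont_Ta.comp continuous_snd)).clm_apply
      (cont_Ta.comp continuous_snd)
  have hGc : Continuous fun p : ℝ × ℝ => G u (P p.1 p.2) (Om p.2) :=
    ((cont_G hu).comp cont_P).clm_apply (cont_Om.comp continuous_snd)
  exact (continuous_fst.mul hHc).sub hGc

lemma cont_GPOm : Continuous fun p : ℝ × ℝ => G u (P p.1 p.2) (Om p.2) :=
  ((cont_G hu).comp cont_P).clm_apply (cont_Om.comp continuous_snd)

lemma cont_A : Continuous fun p : ℝ × ℝ =>
    G u (P p.1 p.2) (Om p.2) + p.1 * H u (P p.1 p.2) (Om p.2) (Om p.2) := by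
  have hHc : Continuous fun p : ℝ × ℝ => H u (P p.1 p.2) (Om p.2) (Om p.2) :=
    (((cont_H hu).comp cont_P).clm_apply (cont_Om.comp continuous_snd)).clm_apply
      (cont_Om.comp continuous_snd)
  exact (cont_GPOm hu).add (continuous_fst.mul hHc)

omit hu in
lemma P_per (s : ℝ) : P s π = P s (-π) := by
  unfold P
  simp

omit hu in
lemma Ta_per : Ta π = Ta (-π) := by
  unfold Ta
  simp

lemma intB (s : ℝ) :
    ∫ θ in (-π)..π, (s * H u (P s θ) (Ta θ) (Ta θ) - G u (P s θ) (Om θ)) = 0 := by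
  have hint : IntervalIntegrable
      (fun θ => s * H u (P s θ) (Ta θ) (Ta θ) - G u (P s θ) (Om θ)) volume (-π) π := by
    apply Continuous.intervalIntegrable
    have := (cont_integrand_B hu).comp (by fun_prop : Continuous fun θ : ℝ => ((s, θ) : ℝ × ℝ))
    simpa only [Function.comp_def] using this
  rw [intervalIntegral.integral_eq_sub_of_hasDerivAt (fun θ _ => hd_B hu s θ) hint,
    P_per, Ta_per, sub_self]

end

lemma swap_cont {a b c d : ℝ} (hab : a ≤ b) (hcd : c ≤ d) {f : ℝ → ℝ → ℝ}
    (hf : Continuous fun p : ℝ × ℝ => f p.1 p.2) :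
    ∫ x in a..b, ∫ y in c..d, f x y = ∫ y in c..d, ∫ x in a..b, f x y := by
  rw [intervalIntegral.integral_of_le hab, intervalIntegral.integral_of_le hcd]
  simp_rw [intervalIntegral.integral_of_le hcd, intervalIntegral.integral_of_le hab]
  apply MeasureTheory.integral_integral_swap
  rw [Measure.prod_restrict]
  have h1 : IntegrableOn (Function.uncurry f) (Icc a b ×ˢ Icc c d) (volume.prod volume) := by
    rw [← Measure.volume_eq_prod]
    apply ContinuousOn.integrableOn_compact (isCompact_Icc.prod isCompact_Icc)
    exact (hf.comp continuous_id).continuousOn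
  exact h1.mono_set (Set.prod_mono Ioc_subset_Icc_self Ioc_subset_Icc_self)

section

variable {u : E2 → ℝ} (hu : ContDiff ℝ (⊤ : ℕ∞) u)

def W (u : E2 → ℝ) (r : ℝ) : ℝ := ∫ θ in (-π)..π, r * G u (P r θ) (Om θ)

def F (u : E2 → ℝ) (r : ℝ) : ℝ := ∫ θ in (-π)..π, u (P r θ)

include hu

lemma intA (θ r1 r2 : ℝ) :
    ∫ s in r1..r2, (G u (P s θ) (Om θ) + s * H u (P s θ) (Om θ) (Om θ)) =
      r2 * G u (P r2 θ) (Om θ) - r1 * G u (P r1 θ) (Om θ) := by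
  apply intervalIntegral.integral_eq_sub_of_hasDerivAt (fun s _ => hd_V hu s θ)
  apply Continuous.intervalIntegrable
  exact (cont_A hu).comp (Continuous.prodMk continuous_id continuous_const)

lemma W_eq {r : ℝ} (hr : 0 ≤ r) : W u r =
    ∫ s in (0:ℝ)..r, ∫ θ in (-π)..π,
      (G u (P s θ) (Om θ) + s * H u (P s θ) (Om θ) (Om θ)) := by
  have hpi : (-π : ℝ) ≤ π := by linarith [pi_pos]
  have hswap := swap_cont hpi hr
    (f := fun θ s => G u (P s θ) (Om θ) + s * H u (P s θ) (Om θ) (Om θ))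
    (((cont_A hu).comp (continuous_snd.prodMk continuous_fst)))
  rw [← hswap]
  unfold W
  apply intervalIntegral.integral_congr
  intro θ _
  show r * G u (P r θ) (Om θ) =
    ∫ s in (0:ℝ)..r, (G u (P s θ) (Om θ) + s * H u (P s θ) (Om θ) (Om θ))
  rw [intA hu θ 0 r]
  simp

omit hu in
lemma key_identity (s θ : ℝ) : G u (P s θ) (Om θ) + s * H u (P s θ) (Om θ) (Om θ)
    = s * lap u (P s θ) - (s * H u (P s θ) (Ta θ) (Ta θ) - G u (P s θ) (Om θ)) := by
  rw [lap_eq, ← H_rot (u := u) (P s θ) θ]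
  ring

lemma cont_lapP : Continuous fun p : ℝ × ℝ => lap u (P p.1 p.2) := by
  have hrw : (fun p : ℝ × ℝ => lap u (P p.1 p.2)) = fun p : ℝ × ℝ =>
      H u (P p.1 p.2) e1 e1 + H u (P p.1 p.2) e2 e2 := funext fun p => lap_eq _
  rw [hrw]
  apply Continuous.add <;>
  · apply Continuous.clm_apply ?_ continuous_const
    apply Continuous.clm_apply ?_ continuous_const
    exact (cont_H hu).comp cont_P

set_option maxHeartbeats 1000000 in
lemma W_nonneg (hlap : ∀ x, 0 ≤ lap u x) {r : ℝ} (hr : 0 ≤ r) : 0 ≤ W u r := by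
  rw [W_eq hu hr]
  apply intervalIntegral.integral_nonneg hr
  intro s hs
  have hrw : (fun θ => G u (P s θ) (Om θ) + s * H u (P s θ) (Om θ) (Om θ))
      = fun θ => s * lap u (P s θ) - (s * H u (P s θ) (Ta θ) (Ta θ) - G u (P s θ) (Om θ)) :=
    funext fun θ => key_identity s θ
  have hpair : Continuous fun θ : ℝ => ((s, θ) : ℝ × ℝ) := continuous_const.prodMk continuous_id
  have hc0 : Continuous fun θ : ℝ => lap u (P s θ) := by
    have h2 := (cont_lapP hu).comp hpair
    simpa only [Function.comp_def] using h2
  have hc1 : Continuous fun θ => s * lap u (P s θ) := continuous_const.mul hc0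
  have hc2 : Continuous fun θ => s * H u (P s θ) (Ta θ) (Ta θ) - G u (P s θ) (Om θ) :=
    by simpa only [Function.comp_def] using (cont_integrand_B hu).comp hpair
  rw [hrw, intervalIntegral.integral_sub (hc1.intervalIntegrable _ _)
    (hc2.intervalIntegrable _ _), intB hu s, sub_zero]
  apply intervalIntegral.integral_nonneg (by linarith [pi_pos])
  intro θ _
  exact mul_nonneg hs.1 (hlap _)

lemma F_mono (hlap : ∀ x, 0 ≤ lap u x) {r : ℝ} (hr : 1 ≤ r) : F u 1 ≤ F u r := by
  have hpi : (-π : ℝ) ≤ π := by linarith [pi_pos]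
  have hcu : ∀ t : ℝ, Continuous fun θ : ℝ => u (P t θ) := fun t =>
    (hu.continuous).comp (cont_P.comp (continuous_const.prodMk continuous_id))
  have h2 : (fun θ => u (P r θ) - u (P 1 θ))
      = fun θ => ∫ s in (1:ℝ)..r, G u (P s θ) (Om θ) := by
    funext θ
    rw [intervalIntegral.integral_eq_sub_of_hasDerivAt (fun s _ => hd_uP hu s θ)
      (Continuous.intervalIntegrable
        ((cont_GPOm hu).comp (continuous_id.prodMk continuous_const)) _ _)]
  have h1 : F u r - F u 1 = ∫ θ in (-π)..π, (u (P r θ) - u (P 1 θ)) := by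
    unfold F
    rw [intervalIntegral.integral_sub ((hcu r).intervalIntegrable _ _)
      ((hcu 1).intervalIntegrable _ _)]
  have hswap := swap_cont hpi hr (f := fun θ s => G u (P s θ) (Om θ))
    ((cont_GPOm hu).comp (continuous_snd.prodMk continuous_fst))
  have h3 : F u r - F u 1 = ∫ s in (1:ℝ)..r, ∫ θ in (-π)..π, G u (P s θ) (Om θ) := by
    rw [h1, h2, hswap]
  have h4 : 0 ≤ F u r - F u 1 := by
    rw [h3]
    apply intervalIntegral.integral_nonneg hr
    intro s hs
    have hspos : (0:ℝ) < s := lt_of_lt_of_le one_pos hs.1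
    have hWs : W u s = s * ∫ θ in (-π)..π, G u (P s θ) (Om θ) := by
      unfold W
      rw [intervalIntegral.integral_const_mul]
    have hW := W_nonneg hu hlap (le_of_lt hspos)
    rw [hWs] at hW
    exact (mul_nonneg_iff_of_pos_left hspos).mp hW
  linarith

lemma jensen (r : ℝ) :
    2 * π * exp (F u r / π) ≤ ∫ θ in (-π)..π, exp (2 * u (P r θ)) := by
  have hpi : (0:ℝ) < π := pi_pos
  set μ := volume.restrict (Ioc (-π) π) with hμ
  have hμuniv : μ univ = ENNReal.ofReal (2 * π) := by
    rw [hμ, Measure.restrict_apply_univ, Real.volume_Ioc]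
    congr 1
    ring
  haveI : IsFiniteMeasure μ := ⟨by rw [hμuniv]; exact ENNReal.ofReal_lt_top⟩
  haveI : NeZero μ := ⟨by
    rw [← Measure.measure_univ_ne_zero, hμuniv]
    simp only [ne_eq, ENNReal.ofReal_eq_zero, not_le]
    linarith⟩
  have hcu : Continuous fun θ : ℝ => 2 * u (P r θ) :=
    continuous_const.mul ((hu.continuous).comp (cont_P.comp (continuous_const.prodMk continuous_id)))
  have hfi : Integrable (fun θ : ℝ => 2 * u (P r θ)) μ := hcu.integrableOn_Ioc
  have hgi : Integrable (exp ∘ fun θ : ℝ => 2 * u (P r θ)) μ :=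
    (Real.continuous_exp.comp hcu).integrableOn_Ioc
  have hJ := (convexOn_exp).map_average_le Real.continuous_exp.continuousOn isClosed_univ
    (Filter.Eventually.of_forall fun θ => mem_univ _) hfi hgi
  rw [average_eq, average_eq, measureReal_def, hμuniv, ENNReal.toReal_ofReal (by linarith)] at hJ
  have hInt1 : ∫ θ, 2 * u (P r θ) ∂μ = 2 * F u r := by
    rw [hμ, ← intervalIntegral.integral_of_le (by linarith : (-π:ℝ) ≤ π)]
    unfold F
    rw [intervalIntegral.integral_const_mul]
  have hInt2 : ∫ θ, exp (2 * u (P r θ)) ∂μ = ∫ θ in (-π)..π, exp (2 * u (P r θ)) := by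
    rw [hμ, ← intervalIntegral.integral_of_le (by linarith : (-π:ℝ) ≤ π)]
  have hexp : exp ((2 * π)⁻¹ • (2 * F u r)) = exp (F u r / π) := by
    congr 1
    rw [smul_eq_mul]
    field_simp
  rw [hInt1] at hJ
  have hJ2 : exp (F u r / π) ≤ (2 * π)⁻¹ * ∫ θ, exp (2 * u (P r θ)) ∂μ := by
    rw [← hexp]
    simpa [Function.comp] using hJ
  rw [hInt2] at hJ2
  have h2pi : (0:ℝ) < 2 * π := by linarith
  calc 2 * π * exp (F u r / π)
      ≤ 2 * π * ((2 * π)⁻¹ * ∫ θ in (-π)..π, exp (2 * u (P r θ))) := by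
        exact mul_le_mul_of_nonneg_left hJ2 (le_of_lt h2pi)
    _ = ∫ θ in (-π)..π, exp (2 * u (P r θ)) := by
        field_simp

end

end

section final

open MeasureTheory

noncomputable section

def toE (q : ℝ × ℝ) : E2 := q.1 • e1 + q.2 • e2

def Teq : (ℝ × ℝ) ≃ᵐ E2 :=
  (MeasurableEquiv.finTwoArrow (α := ℝ)).symm.trans
    (MeasurableEquiv.toLp 2 (Fin 2 → ℝ))

lemma toE_eq : toE = ⇑Teq := by
  funext q
  have : Teq q = (WithLp.equiv 2 (Fin 2 → ℝ)).symm ![q.1, q.2] := rfl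
  rw [this]
  ext i
  fin_cases i <;>
    simp [toE, e1, e2, EuclideanSpace.single_apply]

lemma mp_toE : MeasurePreserving toE volume volume := by
  rw [toE_eq]
  exact ((EuclideanSpace.volume_preserving_symm_measurableEquiv_toLp (Fin 2)).symm _).comp
    ((volume_preserving_finTwoArrow ℝ).symm _)

lemma toE_polar (p : ℝ × ℝ) : toE (polarCoord.symm p) = P p.1 p.2 := by
  rw [polarCoord_symm_apply]
  rfl

end

end final

end NoSolAux
open NoSolAux Set in
/-- For `Q < 0` there is no smooth `u : ℝ² → ℝ` with `-Δu = Q e^{2u}`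
and `∫ e^{2u} < ∞`. -/
theorem no_solution_dim_two_negative (Q : ℝ) (hQ : Q < 0) :
    ¬ ∃ u : EuclideanSpace ℝ (Fin 2) → ℝ, ContDiff ℝ (⊤ : ℕ∞) u ∧
      (∀ x, -lap u x = Q * Real.exp (2 * u x)) ∧
      Integrable (fun x => Real.exp (2 * u x)) := by
  rintro ⟨u, hu, heq, hint⟩
  have hpi : (0:ℝ) < π := pi_pos
  have hlap : ∀ x, 0 ≤ lap u x := by
    intro x
    have h := heq x
    nlinarith [Real.exp_pos (2 * u x)]
  set c₀ := 2 * π * exp (F u 1 / π) with hc₀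
  have hc₀pos : 0 < c₀ := by positivity
  have hkey : ∀ r : ℝ, 1 ≤ r → c₀ ≤ ∫ θ in (-π)..π, exp (2 * u (P r θ)) := by
    intro r hr
    refine le_trans ?_ (jensen hu r)
    have hF := F_mono hu hlap hr
    have h1 : exp (F u 1 / π) ≤ exp (F u r / π) :=
      exp_le_exp.mpr ((div_le_div_iff_of_pos_right hpi).mpr hF)
    rw [hc₀]
    nlinarith
  -- transfer integrability to ℝ × ℝ
  have hemb : MeasurableEmbedding toE := by
    rw [toE_eq]
    exact Teq.measurableEmbedding
  have hgi : Integrable (fun q : ℝ × ℝ => exp (2 * u (toE q))) := by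
    have h2 := (mp_toE.integrable_comp_emb hemb
      (g := fun x => exp (2 * u x))).mpr hint
    simpa [Function.comp_def] using h2
  set I := ∫ q : ℝ × ℝ, exp (2 * u (toE q)) with hI
  set hfun : ℝ × ℝ → ℝ := fun p => p.1 * exp (2 * u (P p.1 p.2)) with hhfun
  have hfun_eq : (fun p : ℝ × ℝ => p.1 • exp (2 * u (toE (polarCoord.symm p)))) = hfun := by
    funext p
    rw [hhfun, toE_polar, smul_eq_mul]
  have hpolar : (∫ p in polarCoord.target, hfun p) = I := by
    rw [← hfun_eq]
    exact integral_comp_polarCoord_symm (fun q => exp (2 * u (toE q)))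
  -- integrability of hfun on the target
  have hmeas : MeasurableSet polarCoord.target := polarCoord.open_target.measurableSet
  have hInt : IntegrableOn hfun polarCoord.target := by
    set B : ℝ × ℝ → ℝ × ℝ →L[ℝ] ℝ × ℝ := fun p =>
      LinearMap.toContinuousLinearMap (Matrix.toLin (Module.Basis.finTwoProd ℝ) (Module.Basis.finTwoProd ℝ)
        !![cos p.2, -p.1 * sin p.2; sin p.2, p.1 * cos p.2]) with hB
    have hder : ∀ p ∈ polarCoord.target,
        HasFDerivWithinAt polarCoord.symm (B p) polarCoord.target p := fun p _ =>
      (hasFDerivAt_polarCoord_symm p).hasFDerivWithinAt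
    have hinj : Set.InjOn polarCoord.symm polarCoord.target := polarCoord.symm.injOn
    have himg : IntegrableOn (fun q => exp (2 * u (toE q)))
        (polarCoord.symm '' polarCoord.target) := hgi.integrableOn
    have h3 := (integrableOn_image_iff_integrableOn_abs_det_fderiv_smul volume hmeas hder hinj
      (fun q => exp (2 * u (toE q)))).mp himg
    have B_det : ∀ p, (B p).det = p.1 := by
      intro p
      conv_rhs => rw [← one_mul p.1, ← cos_sq_add_sin_sq p.2]
      simp only [hB, neg_mul, LinearMap.det_toContinuousLinearMap, LinearMap.det_toLin,
        Matrix.det_fin_two_of, sub_neg_eq_add]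
      ring
    apply h3.congr_fun ?_ hmeas
    intro p hp
    have hp1 : 0 < p.1 := hp.1
    rw [hhfun]
    simp only [B_det, toE_polar, smul_eq_mul, abs_of_pos hp1]
  -- lower bound over sub-rectangles
  have hbound : ∀ R : ℝ, 1 ≤ R → c₀ * (R ^ 2 - 1) / 2 ≤ I := by
    intro R hR
    set S : Set (ℝ × ℝ) := Ioc 1 R ×ˢ Ioo (-π) π with hS
    have hsub : S ⊆ polarCoord.target := by
      rw [hS]
      exact Set.prod_mono (fun x hx => lt_of_lt_of_le one_pos hx.1.le) subset_rfl
    have hIntS : IntegrableOn hfun S := hInt.mono_set hsub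
    have hnonneg : 0 ≤ᵐ[volume.restrict polarCoord.target] hfun := by
      rw [EventuallyLE, ae_restrict_iff' hmeas]
      refine Filter.Eventually.of_forall fun p hp => ?_
      exact mul_nonneg (le_of_lt hp.1) (exp_pos _).le
    have h1 : ∫ p in S, hfun p ≤ ∫ p in polarCoord.target, hfun p :=
      setIntegral_mono_set hInt hnonneg (HasSubset.Subset.eventuallyLE hsub)
    -- iterated integral over S
    have hprodInt : Integrable hfun
        ((volume.restrict (Ioc (1:ℝ) R)).prod (volume.restrict (Ioo (-π) π))) := by
      rw [Measure.prod_restrict, ← Measure.volume_eq_prod]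
      exact hIntS
    have h2 : ∫ p in S, hfun p
        = ∫ s in Ioc (1:ℝ) R, ∫ θ in Ioo (-π) π, hfun (s, θ) := by
      rw [hS, Measure.volume_eq_prod, ← Measure.prod_restrict]
      exact MeasureTheory.integral_prod hfun hprodInt
    have hinner : ∀ s ∈ Ioc (1:ℝ) R, c₀ * s ≤ ∫ θ in Ioo (-π) π, hfun (s, θ) := by
      intro s hs
      have hs1 : (1:ℝ) ≤ s := hs.1.le
      have hval : ∫ θ in Ioo (-π) π, hfun (s, θ)
          = s * ∫ θ in (-π)..π, exp (2 * u (P s θ)) := by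
        rw [← MeasureTheory.integral_Ioc_eq_integral_Ioo,
          ← intervalIntegral.integral_of_le (by linarith : (-π:ℝ) ≤ π), hhfun]
        rw [← intervalIntegral.integral_const_mul]
      rw [hval]
      calc c₀ * s = s * c₀ := by ring
        _ ≤ s * ∫ θ in (-π)..π, exp (2 * u (P s θ)) :=
          mul_le_mul_of_nonneg_left (hkey s hs1) (by linarith)
    have houter : ∫ s in Ioc (1:ℝ) R, c₀ * s
        ≤ ∫ s in Ioc (1:ℝ) R, ∫ θ in Ioo (-π) π, hfun (s, θ) := by
      apply setIntegral_mono_on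
      · exact (continuous_const.mul continuous_id).integrableOn_Ioc
      · exact hprodInt.integral_prod_left
      · exact measurableSet_Ioc
      · exact hinner
    have hval2 : ∫ s in Ioc (1:ℝ) R, c₀ * s = c₀ * (R ^ 2 - 1) / 2 := by
      rw [← intervalIntegral.integral_of_le hR, intervalIntegral.integral_const_mul,
        integral_id]
      ring
    rw [← hpolar]
    calc c₀ * (R ^ 2 - 1) / 2 = ∫ s in Ioc (1:ℝ) R, c₀ * s := hval2.symm
      _ ≤ ∫ s in Ioc (1:ℝ) R, ∫ θ in Ioo (-π) π, hfun (s, θ) := houter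
      _ = ∫ p in S, hfun p := h2.symm
      _ ≤ ∫ p in polarCoord.target, hfun p := h1
  -- contradiction
  set R := Real.sqrt (2 * (|I| + 1) / c₀ + 1) with hR
  have hargnn : 0 ≤ 2 * (|I| + 1) / c₀ := by positivity
  have hR2 : R ^ 2 = 2 * (|I| + 1) / c₀ + 1 := Real.sq_sqrt (by linarith)
  have hR1 : 1 ≤ R := by
    have h4 := Real.sqrt_le_sqrt (show (1:ℝ) ≤ 2 * (|I| + 1) / c₀ + 1 by linarith)
    rwa [Real.sqrt_one] at h4
  have hfin := hbound R hR1
  rw [hR2] at hfin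
  have : c₀ * (2 * (|I| + 1) / c₀ + 1 - 1) / 2 = |I| + 1 := by
    field_simp
    ring
  rw [this] at hfin
  have := le_abs_self I
  linarith
end

section
/- Let u be a solution of (1)-(2) with constant Q = -(2m-1)!, and let v and α be as defined. Then there exists a constant C such that v(x) ≤ 2α log|x| + C for all x ∈ ℝ^{2m} with |x| ≥ 4. -/
open MeasureTheory Real Filter Topology

section Aux
open Set
open scoped ENNReal

lemma gamma_half (k : ℕ) : Real.Gamma ((k:ℝ) + 1/2) =
    Real.sqrt π * (2*k).factorial / (4^k * k.factorial) := by
  induction k with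
  | zero => simpa using Real.Gamma_one_half_eq
  | succ k ih =>
    have h : ((k:ℝ)+1) + 1/2 = ((k:ℝ) + 1/2) + 1 := by ring
    rw [Nat.cast_succ, h, Real.Gamma_add_one (by positivity), ih]
    have h1 : (2*(k+1)).factorial = (2*k+2) * ((2*k+1) * (2*k).factorial) := by
      rw [show 2*(k+1) = (2*k+1) + 1 from by ring, Nat.factorial_succ,
        show 2*k+1 = (2*k)+1 from rfl, Nat.factorial_succ]
    have h2 : (k+1).factorial = (k+1) * k.factorial := Nat.factorial_succ k
    rw [h1, h2]
    have hk : (k.factorial : ℝ) ≠ 0 := Nat.cast_ne_zero.mpr k.factorial_ne_zero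
    push_cast
    field_simp
    ring

lemma sphereVol_eq (k : ℕ) : sphereVol k =
    ((k:ℝ)+1) * (Real.sqrt π ^ (k+1) / Real.Gamma (((k:ℝ)+1) / 2 + 1)) := by
  rw [sphereVol, EuclideanSpace.volume_ball]
  have hg : 0 < Real.Gamma (((Fintype.card (Fin (k+1)) : ℕ):ℝ) / 2 + 1) := by
    apply Real.Gamma_pos_of_pos; positivity
  simp only [Fintype.card_fin] at hg ⊢
  rw [ENNReal.ofReal_one, one_pow, one_mul, ENNReal.toReal_ofReal (by positivity)]
  push_cast
  ring_nf

lemma sqrtpi_pow_even (k : ℕ) : Real.sqrt π ^ (2*k) = π ^ k := by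
  rw [pow_mul, Real.sq_sqrt Real.pi_pos.le]

lemma sphereVol_odd (k : ℕ) : sphereVol (2*k+1) = (2*(k:ℝ)+2) * π^(k+1) / (k+1).factorial := by
  rw [sphereVol_eq]
  have h1 : ((2*k+1 : ℕ):ℝ) + 1 = 2*(k:ℝ)+2 := by push_cast; ring
  have h2 : (((2*k+1 : ℕ):ℝ) + 1)/2 + 1 = ((k+1 : ℕ):ℝ) + 1 := by push_cast; ring
  rw [h2, Real.Gamma_nat_eq_factorial]
  have h3 : Real.sqrt π ^ (2*k+1+1) = π^(k+1) := by
    rw [show 2*k+1+1 = 2*(k+1) from by ring, sqrtpi_pow_even]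
  rw [h3, h1, mul_div_assoc]

lemma sphereVol_even (k : ℕ) :
    sphereVol (2*k) = (2*(k:ℝ)+1) * π^k * 4^(k+1) * (k+1).factorial / (2*k+2).factorial := by
  rw [sphereVol_eq]
  have h2 : (((2*k : ℕ):ℝ) + 1)/2 + 1 = ((k+1 : ℕ):ℝ) + 1/2 := by push_cast; ring
  rw [h2, gamma_half]
  have h3 : Real.sqrt π ^ (2*k+1) = π^k * Real.sqrt π := by
    rw [pow_succ, sqrtpi_pow_even]
  rw [h3]
  have hs : Real.sqrt π ≠ 0 := by positivity
  have h4 : (2*(k+1)) = 2*k+2 := by ring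
  rw [h4]
  have hf : ((2*k+2).factorial : ℝ) ≠ 0 := Nat.cast_ne_zero.mpr (Nat.factorial_ne_zero _)
  have hf2 : ((k+1).factorial : ℝ) ≠ 0 := Nat.cast_ne_zero.mpr (Nat.factorial_ne_zero _)
  push_cast
  field_simp

lemma const_identity (M : ℕ) :
    (((2*(M+1)-1).factorial : ℝ)) * sphereVol (2*(M+1)) = 2 * gammaConst (M+1) := by
  have e1 : 2*(M+1)-1 = 2*M+1 := by omega
  have e2 : 2*(M+1) = 2*(M+1) := rfl
  have e3 : 2*(M+1)-2 = 2*M := by omega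
  have e4 : (M+1)-1 = M := by omega
  rw [gammaConst, e1, e3, e4, sphereVol_even (M+1), sphereVol_odd M]
  have hfM : ((M.factorial : ℝ)) ≠ 0 := Nat.cast_ne_zero.mpr (Nat.factorial_ne_zero _)
  have hfM1 : (((M+1).factorial : ℝ)) ≠ 0 := Nat.cast_ne_zero.mpr (Nat.factorial_ne_zero _)
  have hfA : (((2*(M+1)+2).factorial : ℝ)) ≠ 0 := Nat.cast_ne_zero.mpr (Nat.factorial_ne_zero _)
  -- expand big factorials
  have hA : ((2*(M+1)+2).factorial : ℝ)
      = (2*(M:ℝ)+4) * ((2*(M:ℝ)+3) * ((2*(M:ℝ)+2) * ((2*M+1).factorial : ℝ))) := by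
    rw [show 2*(M+1)+2 = (2*M+3)+1 from by ring, Nat.factorial_succ,
      show 2*M+3 = (2*M+2)+1 from by ring, Nat.factorial_succ,
      show 2*M+2 = (2*M+1)+1 from by ring, Nat.factorial_succ]
    push_cast; ring
  have hB : (((M+1)+1).factorial : ℝ) = ((M:ℝ)+2) * (((M:ℝ)+1) * (M.factorial : ℝ)) := by
    rw [Nat.factorial_succ, Nat.factorial_succ]; push_cast; ring
  have hC : (((M+1)).factorial : ℝ) = ((M:ℝ)+1) * (M.factorial : ℝ) := by
    rw [Nat.factorial_succ]; push_cast; ring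
  have hfact : ((2*M+1).factorial : ℝ) ≠ 0 := Nat.cast_ne_zero.mpr (Nat.factorial_ne_zero _)
  rw [show 2*(M+1)+2 = 2*(M+1)+2 from rfl] at hA
  push_cast [hA, hB, hC]
  rw [show (2:ℝ)^(2*M) = 4^M from by rw [pow_mul]; norm_num]
  have hπ : (0:ℝ) < π := Real.pi_pos
  field_simp
  ring

lemma integrableOn_rpow_ball (hn : 1 ≤ n) :
    IntegrableOn (fun y : EuclideanSpace ℝ (Fin n) => ‖y‖ ^ (-(1/2) : ℝ))
      (Metric.ball 0 1) volume := by
  set E := EuclideanSpace ℝ (Fin n) with hE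
  haveI : FiniteDimensional ℝ E := by infer_instance
  set μ : Measure E := volume.restrict (Metric.ball 0 1) with hμ
  have hmeas : Measurable fun y : E => ‖y‖ ^ (-(1/2) : ℝ) :=
    (measurable_norm.pow_const _)
  have hnn : ∀ y : E, 0 ≤ ‖y‖ ^ (-(1/2) : ℝ) := fun y => Real.rpow_nonneg (norm_nonneg _) _
  refine ⟨hmeas.aestronglyMeasurable, ?_⟩
  rw [hasFiniteIntegral_iff_ofReal (Eventually.of_forall hnn)]
  rw [lintegral_eq_lintegral_meas_le μ (Eventually.of_forall hnn) hmeas.aemeasurable]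
  set V := volume (Metric.ball (0:E) 1) with hV
  have hrank : Module.finrank ℝ E = n := finrank_euclideanSpace_fin
  have key : ∀ t : ℝ, 0 < t → μ {a : E | t ≤ ‖a‖ ^ (-(1/2) : ℝ)} ≤
      min V (ENNReal.ofReal ((t ^ (-2:ℝ)) ^ n) * V) := by
    intro t ht
    refine le_min ?_ ?_
    · calc μ _ ≤ μ univ := measure_mono (subset_univ _)
        _ ≤ V := by rw [hμ, Measure.restrict_apply_univ]
    · have hsub : {a : E | t ≤ ‖a‖ ^ (-(1/2) : ℝ)} ⊆ Metric.closedBall 0 (t ^ (-2:ℝ)) := by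
        intro a ha
        simp only [mem_setOf_eq] at ha
        have ha0 : a ≠ 0 := by
          rintro rfl
          rw [norm_zero, Real.zero_rpow (by norm_num)] at ha
          exact absurd ha (not_le.mpr ht)
        have hna : 0 < ‖a‖ := norm_pos_iff.mpr ha0
        rw [Metric.mem_closedBall, dist_zero_right]
        have h1 : (‖a‖ ^ (-(1/2):ℝ)) ^ (-2:ℝ) ≤ t ^ (-2:ℝ) :=
          Real.rpow_le_rpow_of_nonpos ht ha (by norm_num)
        rwa [← Real.rpow_mul (norm_nonneg a), show (-(1/2) : ℝ) * (-2) = 1 from by norm_num,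
          Real.rpow_one] at h1
      calc μ _ ≤ volume {a : E | t ≤ ‖a‖ ^ (-(1/2) : ℝ)} := Measure.restrict_le_self _
        _ ≤ volume (Metric.closedBall (0:E) (t ^ (-2:ℝ))) := measure_mono hsub
        _ = ENNReal.ofReal ((t ^ (-2:ℝ)) ^ Module.finrank ℝ E) * V :=
            Measure.addHaar_closedBall _ _ (Real.rpow_nonneg ht.le _)
        _ = ENNReal.ofReal ((t ^ (-2:ℝ)) ^ n) * V := by rw [hrank]
  have hVfin : V < ∞ := measure_ball_lt_top
  calc ∫⁻ t in Ioi (0:ℝ), μ {a : E | t ≤ ‖a‖ ^ (-(1/2) : ℝ)}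
      ≤ ∫⁻ t in Ioc 0 1 ∪ Ioi 1, μ {a : E | t ≤ ‖a‖ ^ (-(1/2) : ℝ)} :=
        lintegral_mono_set Ioi_subset_Ioc_union_Ioi
    _ ≤ (∫⁻ t in Ioc 0 1, μ {a : E | t ≤ ‖a‖ ^ (-(1/2) : ℝ)}) +
        ∫⁻ t in Ioi 1, μ {a : E | t ≤ ‖a‖ ^ (-(1/2) : ℝ)} := lintegral_union_le _ _ _
    _ < ∞ := by
        refine ENNReal.add_lt_top.2 ⟨?_, ?_⟩
        · calc (∫⁻ t in Ioc (0:ℝ) 1, μ {a : E | t ≤ ‖a‖ ^ (-(1/2) : ℝ)})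
              ≤ ∫⁻ _ in Ioc (0:ℝ) 1, V :=
                setLIntegral_mono' measurableSet_Ioc fun t ht =>
                  le_trans (key t ht.1) (min_le_left _ _)
            _ = V * volume (Ioc (0:ℝ) 1) := setLIntegral_const _ _
            _ < ∞ := by
                apply ENNReal.mul_lt_top hVfin
                simp [Real.volume_Ioc]
        · have hb : ∀ t ∈ Ioi (1:ℝ), μ {a : E | t ≤ ‖a‖ ^ (-(1/2) : ℝ)} ≤
              ENNReal.ofReal (t ^ (-2:ℝ)) * V := by
            intro t ht
            have ht1 : (1:ℝ) < t := ht
            have ht0 : (0:ℝ) < t := lt_trans one_pos ht1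
            refine le_trans (le_trans (key t ht0) (min_le_right _ _)) ?_
            gcongr
            have hle1 : t ^ (-2:ℝ) ≤ 1 := by
              rw [show (1:ℝ) = t ^ (0:ℝ) from (Real.rpow_zero t).symm]
              exact Real.rpow_le_rpow_of_exponent_le ht1.le (by norm_num)
            calc (t ^ (-2:ℝ)) ^ n ≤ t ^ (-2:ℝ) :=
                  pow_le_of_le_one (Real.rpow_nonneg ht0.le _) hle1 (by omega)
              _ ≤ t ^ (-2:ℝ) := le_rfl
          calc (∫⁻ t in Ioi (1:ℝ), μ {a : E | t ≤ ‖a‖ ^ (-(1/2) : ℝ)})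
              ≤ ∫⁻ t in Ioi (1:ℝ), ENNReal.ofReal (t ^ (-2:ℝ)) * V :=
                setLIntegral_mono' measurableSet_Ioi hb
            _ = (∫⁻ t in Ioi (1:ℝ), ENNReal.ofReal (t ^ (-2:ℝ))) * V :=
                lintegral_mul_const' _ _ hVfin.ne
            _ < ∞ := by
                apply ENNReal.mul_lt_top _ hVfin
                exact (integrableOn_Ioi_rpow_of_lt (by norm_num) one_pos).setLIntegral_lt_top

lemma log_bound {t : ℝ} (ht : 0 < t) : Real.log ((1+t)/t) ≤ 3 * t ^ (-(1/2):ℝ) := by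
  have hs : 0 < t ^ (-(1/2):ℝ) := Real.rpow_pos_of_pos ht _
  rcases le_or_gt 1 t with h | h
  · have h0 : (1+t)/t = 1 + 1/t := by field_simp; ring
    rw [h0]
    have h1 : Real.log (1+1/t) ≤ 1/t := by
      have := Real.log_le_sub_one_of_pos (show (0:ℝ) < 1+1/t by positivity); linarith
    have h2 : 1/t ≤ t ^ (-(1/2):ℝ) := by
      rw [one_div, ← Real.rpow_neg_one]
      exact Real.rpow_le_rpow_of_exponent_le h (by norm_num)
    linarith
  · have hlog2 : Real.log ((1+t)/t) ≤ Real.log (2/t) := by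
      apply Real.log_le_log (by positivity)
      gcongr
      linarith
    have hdiv : Real.log (2/t) = Real.log 2 - Real.log t := Real.log_div two_ne_zero ht.ne'
    have hneg : -Real.log t = 2 * Real.log (t ^ (-(1/2):ℝ)) := by
      rw [Real.log_rpow ht]; ring
    have h3 : Real.log (t ^ (-(1/2):ℝ)) ≤ t ^ (-(1/2):ℝ) - 1 := Real.log_le_sub_one_of_pos hs
    have hlog2' : Real.log 2 ≤ 1 := by
      have := Real.log_le_sub_one_of_pos (show (0:ℝ) < 2 by norm_num); linarith
    have hs1 : 1 ≤ t ^ (-(1/2):ℝ) :=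
      Real.one_le_rpow_of_pos_of_le_one_of_nonpos ht h.le (by norm_num)
    linarith

lemma pointwise_bound {n : ℕ} (x y : EuclideanSpace ℝ (Fin n)) (hx : 4 ≤ ‖x‖)
    {e : ℝ} (he : 0 < e) :
    -(Real.log (‖y‖ / ‖x - y‖) * e) ≤
      Real.log ‖x‖ * e + 3 * (‖y‖ ^ (-(1/2):ℝ) * e) := by
  have hx1 : (1:ℝ) ≤ ‖x‖ := by linarith
  have hlx : 0 ≤ Real.log ‖x‖ := Real.log_nonneg hx1
  have hrnn : 0 ≤ ‖y‖ ^ (-(1/2):ℝ) := Real.rpow_nonneg (norm_nonneg _) _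
  have hRHS0 : 0 ≤ Real.log ‖x‖ * e + 3 * (‖y‖ ^ (-(1/2):ℝ) * e) := by positivity
  by_cases hy : y = 0
  · simp only [hy, norm_zero, zero_div, Real.log_zero, neg_zero, sub_zero]
    simpa [hy] using hRHS0
  by_cases hxy : x = y
  · rw [show ‖x - y‖ = 0 from by rw [hxy, sub_self, norm_zero], div_zero, Real.log_zero]
    simpa using hRHS0
  have ha : 0 < ‖y‖ := norm_pos_iff.mpr hy
  have hb : 0 < ‖x - y‖ := by
    rw [norm_pos_iff, sub_ne_zero]; exact hxy
  have key : -Real.log (‖y‖ / ‖x - y‖) ≤ Real.log ‖x‖ + 3 * ‖y‖ ^ (-(1/2):ℝ) := by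
    rw [Real.log_div ha.ne' hb.ne', neg_sub]
    have h1 : Real.log ‖x - y‖ ≤ Real.log (‖x‖ * (1 + ‖y‖)) := by
      apply Real.log_le_log hb
      calc ‖x - y‖ ≤ ‖x‖ + ‖y‖ := norm_sub_le _ _
        _ ≤ ‖x‖ * (1 + ‖y‖) := by nlinarith
    rw [Real.log_mul (by positivity) (by positivity)] at h1
    have h2 : Real.log (1 + ‖y‖) - Real.log ‖y‖ ≤ 3 * ‖y‖ ^ (-(1/2):ℝ) := by
      have := log_bound ha
      rwa [Real.log_div (by positivity) ha.ne'] at this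
    linarith
  calc -(Real.log (‖y‖ / ‖x - y‖) * e) = (-Real.log (‖y‖ / ‖x - y‖)) * e := by ring
    _ ≤ (Real.log ‖x‖ + 3 * ‖y‖ ^ (-(1/2):ℝ)) * e := by
        apply mul_le_mul_of_nonneg_right key he.le
    _ = Real.log ‖x‖ * e + 3 * (‖y‖ ^ (-(1/2):ℝ) * e) := by ring

lemma integrable_F {n : ℕ} (hn : 1 ≤ n) {e : EuclideanSpace ℝ (Fin n) → ℝ}
    (hec : Continuous e) (hep : ∀ y, 0 < e y) (hei : Integrable e) :
    Integrable (fun y : EuclideanSpace ℝ (Fin n) => ‖y‖ ^ (-(1/2) : ℝ) * e y) := by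
  have hFm : AEStronglyMeasurable (fun y : EuclideanSpace ℝ (Fin n) => ‖y‖ ^ (-(1/2) : ℝ) * e y) volume :=
    ((measurable_norm.pow_const (-(1/2):ℝ)).mul hec.measurable).aestronglyMeasurable
  obtain ⟨B, hB⟩ := (isCompact_closedBall (0 : EuclideanSpace ℝ (Fin n)) 1).exists_bound_of_continuousOn
    hec.continuousOn
  set B' := max B 0 with hB'
  have h1 : IntegrableOn (fun y : EuclideanSpace ℝ (Fin n) => ‖y‖ ^ (-(1/2) : ℝ) * e y) (Metric.ball 0 1) volume := by
    apply Integrable.mono' ((integrableOn_rpow_ball hn).const_mul B') hFm.restrict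
    filter_upwards [ae_restrict_mem measurableSet_ball] with y hy
    have h2 : e y ≤ B' := by
      have := hB y (Metric.ball_subset_closedBall hy)
      rw [Real.norm_eq_abs, abs_of_pos (hep y)] at this
      exact le_trans this (le_max_left _ _)
    rw [Real.norm_eq_abs, abs_of_nonneg (mul_nonneg (Real.rpow_nonneg (norm_nonneg _) _) (hep y).le)]
    calc ‖y‖ ^ (-(1/2) : ℝ) * e y ≤ ‖y‖ ^ (-(1/2) : ℝ) * B' :=
          mul_le_mul_of_nonneg_left h2 (Real.rpow_nonneg (norm_nonneg _) _)
      _ = B' * ‖y‖ ^ (-(1/2) : ℝ) := mul_comm _ _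
  have h2 : IntegrableOn (fun y : EuclideanSpace ℝ (Fin n) => ‖y‖ ^ (-(1/2) : ℝ) * e y) (Metric.ball 0 1)ᶜ volume := by
    apply Integrable.mono' hei.integrableOn hFm.restrict
    filter_upwards [ae_restrict_mem measurableSet_ball.compl] with y hy
    have hy1 : (1:ℝ) ≤ ‖y‖ := by
      simp only [mem_compl_iff, Metric.mem_ball, dist_zero_right, not_lt] at hy
      exact hy
    have h3 : ‖y‖ ^ (-(1/2) : ℝ) ≤ 1 :=
      Real.rpow_le_one_of_one_le_of_nonpos hy1 (by norm_num)
    rw [Real.norm_eq_abs, abs_of_nonneg (mul_nonneg (Real.rpow_nonneg (norm_nonneg _) _) (hep y).le)]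
    calc ‖y‖ ^ (-(1/2) : ℝ) * e y ≤ 1 * e y :=
          mul_le_mul_of_nonneg_right h3 (hep y).le
      _ = e y := one_mul _
  rw [← integrableOn_univ, ← Set.union_compl_self (Metric.ball (0 : EuclideanSpace ℝ (Fin n)) 1)]
  exact h1.union h2

lemma sphereVol_pos (k : ℕ) : 0 < sphereVol k := by
  apply mul_pos
  · exact_mod_cast Nat.succ_pos k
  · exact ENNReal.toReal_pos (Metric.measure_ball_pos volume _ one_pos).ne' measure_ball_lt_top.ne

lemma gammaConst_pos (m : ℕ) : 0 < gammaConst m := by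
  apply mul_pos (mul_pos (sphereVol_pos _) (by positivity))
  have := Nat.factorial_pos (m-1)
  positivity

end Aux

/-- `v(x) ≤ 2α log|x| + C` for `|x| ≥ 4`. -/
theorem vAux_upper_bound (m : ℕ) (hm : 1 ≤ m)
    (u : EuclideanSpace ℝ (Fin (2 * m)) → ℝ)
    (hu : IsSolution m (-((2 * m - 1).factorial : ℝ)) u) :
    ∃ C : ℝ, ∀ x : EuclideanSpace ℝ (Fin (2 * m)), 4 ≤ ‖x‖ →
      vAux m u x ≤ 2 * solAlpha m u * Real.log ‖x‖ + C := by
  obtain ⟨hcont, -, hint⟩ := hu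
  have hn : 1 ≤ 2*m := by omega
  have hec : Continuous fun y => Real.exp (2*(m:ℝ)*u y) :=
    Real.continuous_exp.comp (continuous_const.mul hcont.continuous)
  have hep : ∀ y, 0 < Real.exp (2*(m:ℝ)*u y) := fun y => Real.exp_pos _
  have hF : Integrable (fun y : EuclideanSpace ℝ (Fin (2*m)) =>
      ‖y‖ ^ (-(1/2):ℝ) * Real.exp (2*(m:ℝ)*u y)) := integrable_F hn hec hep hint
  have hS : 0 < sphereVol (2*m) := sphereVol_pos _
  have hγ : 0 < gammaConst m := gammaConst_pos m
  have hK : (((2*m-1).factorial : ℝ) / gammaConst m) = 2 / sphereVol (2*m) := by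
    rw [div_eq_div_iff hγ.ne' hS.ne']
    obtain ⟨M, rfl⟩ : ∃ M, m = M+1 := ⟨m-1, by omega⟩
    exact const_identity M
  have hK0 : 0 ≤ ((2*m-1).factorial : ℝ) / gammaConst m := by positivity
  have hI0 : 0 ≤ ∫ y, Real.exp (2*(m:ℝ)*u y) := integral_nonneg fun y => (hep y).le
  have hC00 : 0 ≤ ∫ y : EuclideanSpace ℝ (Fin (2*m)),
      ‖y‖ ^ (-(1/2):ℝ) * Real.exp (2*(m:ℝ)*u y) :=
    integral_nonneg fun y => mul_nonneg (Real.rpow_nonneg (norm_nonneg _) _) (hep y).le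
  refine ⟨(((2*m-1).factorial : ℝ) / gammaConst m) *
    (3 * ∫ y : EuclideanSpace ℝ (Fin (2*m)), ‖y‖ ^ (-(1/2):ℝ) * Real.exp (2*(m:ℝ)*u y)), ?_⟩
  intro x hx
  have hlx : 0 ≤ Real.log ‖x‖ := Real.log_nonneg (by linarith)
  have halpha : 0 ≤ solAlpha m u := mul_nonneg (one_div_nonneg.mpr hS.le) hI0
  by_cases hφ : Integrable (fun y : EuclideanSpace ℝ (Fin (2*m)) =>
      Real.log (‖y‖ / ‖x - y‖) * Real.exp (2*(m:ℝ)*u y))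
  · have hgint : Integrable (fun y : EuclideanSpace ℝ (Fin (2*m)) =>
        Real.log ‖x‖ * Real.exp (2*(m:ℝ)*u y) +
          3 * (‖y‖ ^ (-(1/2):ℝ) * Real.exp (2*(m:ℝ)*u y))) :=
      (hint.const_mul _).add (hF.const_mul 3)
    have hmono : (∫ y : EuclideanSpace ℝ (Fin (2*m)),
        -(Real.log (‖y‖ / ‖x - y‖) * Real.exp (2*(m:ℝ)*u y))) ≤
        ∫ y : EuclideanSpace ℝ (Fin (2*m)),
          (Real.log ‖x‖ * Real.exp (2*(m:ℝ)*u y) +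
            3 * (‖y‖ ^ (-(1/2):ℝ) * Real.exp (2*(m:ℝ)*u y))) :=
      integral_mono hφ.neg hgint fun y => pointwise_bound x y hx (hep y)
    have hgval : (∫ y : EuclideanSpace ℝ (Fin (2*m)),
        (Real.log ‖x‖ * Real.exp (2*(m:ℝ)*u y) +
          3 * (‖y‖ ^ (-(1/2):ℝ) * Real.exp (2*(m:ℝ)*u y)))) =
        Real.log ‖x‖ * (∫ y, Real.exp (2*(m:ℝ)*u y)) +
          3 * ∫ y : EuclideanSpace ℝ (Fin (2*m)),
            ‖y‖ ^ (-(1/2):ℝ) * Real.exp (2*(m:ℝ)*u y) := by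
      rw [integral_add (hint.const_mul _) (hF.const_mul 3), integral_const_mul, integral_const_mul]
    rw [hgval] at hmono
    have hv : vAux m u x = (((2*m-1).factorial : ℝ) / gammaConst m) *
        ∫ y : EuclideanSpace ℝ (Fin (2*m)),
          -(Real.log (‖y‖ / ‖x - y‖) * Real.exp (2*(m:ℝ)*u y)) := by
      simp only [vAux, integral_neg]; ring
    rw [hv]
    calc (((2*m-1).factorial : ℝ) / gammaConst m) *
        ∫ y : EuclideanSpace ℝ (Fin (2*m)),
          -(Real.log (‖y‖ / ‖x - y‖) * Real.exp (2*(m:ℝ)*u y))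
        ≤ (((2*m-1).factorial : ℝ) / gammaConst m) *
          (Real.log ‖x‖ * (∫ y, Real.exp (2*(m:ℝ)*u y)) +
            3 * ∫ y : EuclideanSpace ℝ (Fin (2*m)),
              ‖y‖ ^ (-(1/2):ℝ) * Real.exp (2*(m:ℝ)*u y)) :=
          mul_le_mul_of_nonneg_left hmono hK0
      _ = 2 * solAlpha m u * Real.log ‖x‖ + (((2*m-1).factorial : ℝ) / gammaConst m) *
          (3 * ∫ y : EuclideanSpace ℝ (Fin (2*m)),
            ‖y‖ ^ (-(1/2):ℝ) * Real.exp (2*(m:ℝ)*u y)) := by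
          rw [hK, solAlpha]; ring
  · have h0 : vAux m u x = 0 := by
      simp only [vAux]
      rw [integral_undef hφ, mul_zero]
    rw [h0]
    have h1 : 0 ≤ 2 * solAlpha m u * Real.log ‖x‖ :=
      mul_nonneg (mul_nonneg (by norm_num) halpha) hlx
    have h2 : 0 ≤ (((2*m-1).factorial : ℝ) / gammaConst m) *
        (3 * ∫ y : EuclideanSpace ℝ (Fin (2*m)),
          ‖y‖ ^ (-(1/2):ℝ) * Real.exp (2*(m:ℝ)*u y)) :=
      mul_nonneg hK0 (by linarith)
    linarith
end

section
/- Let u be a solution of (1)-(2) with constant Q = -(2m-1)!, and let v be as defined. Then the function x ↦ max(-v(x), 0) belongs to L¹(ℝ^{2m}). -/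
open MeasureTheory Real Filter Topology

section AuxLemmas

open Set

private lemma integrable_logplus (n : ℕ) (hn : 0 < n) :
    Integrable (fun z : EuclideanSpace ℝ (Fin n) => max (Real.log ‖z‖⁻¹) 0) := by
  have hmeas : Measurable (fun z : EuclideanSpace ℝ (Fin n) => max (Real.log ‖z‖⁻¹) 0) :=
    (Real.measurable_log.comp measurable_norm.inv).max measurable_const
  haveI : Nontrivial (EuclideanSpace ℝ (Fin n)) :=
    Module.nontrivial_of_finrank_pos (R := ℝ) (by rw [finrank_euclideanSpace_fin]; exact hn)
  have hnn : ∀ z : EuclideanSpace ℝ (Fin n), 0 ≤ max (Real.log ‖z‖⁻¹) 0 := fun z => le_max_right _ _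
  refine ⟨hmeas.aestronglyMeasurable, ?_⟩
  rw [hasFiniteIntegral_iff_ofReal (Eventually.of_forall hnn)]
  rw [lintegral_eq_lintegral_meas_lt volume (Eventually.of_forall hnn) hmeas.aemeasurable]
  have hset : ∀ t ∈ Set.Ioi (0:ℝ),
      volume {z : EuclideanSpace ℝ (Fin n) | t < max (Real.log ‖z‖⁻¹) 0}
        = ENNReal.ofReal (Real.exp (-t) ^ n) * volume (Metric.ball (0 : EuclideanSpace ℝ (Fin n)) 1) := by
    intro t ht
    have ht' : (0:ℝ) < t := ht
    have : {z : EuclideanSpace ℝ (Fin n) | t < max (Real.log ‖z‖⁻¹) 0}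
        = Metric.ball (0 : EuclideanSpace ℝ (Fin n)) (Real.exp (-t)) \ {0} := by
      ext z
      simp only [Set.mem_setOf_eq, Set.mem_diff, Metric.mem_ball, dist_zero_right,
        Set.mem_singleton_iff]
      constructor
      · intro h
        have h1 : t < Real.log ‖z‖⁻¹ := by
          rcases max_cases (Real.log ‖z‖⁻¹) 0 with ⟨he, _⟩ | ⟨he, _⟩ <;> [skip; linarith [h, he]]
          · rw [he] at h; exact h
        have hz : z ≠ 0 := by
          rintro rfl; simp at h1; linarith
        have hzpos : (0:ℝ) < ‖z‖ := norm_pos_iff.mpr hz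
        rw [Real.lt_log_iff_exp_lt (by positivity)] at h1
        have : ‖z‖ < (Real.exp t)⁻¹ := by
          rw [lt_inv_comm₀ (Real.exp_pos t) hzpos] at h1; exact h1
        rw [Real.exp_neg]
        exact ⟨this, hz⟩
      · rintro ⟨hlt, hz⟩
        have hzpos : (0:ℝ) < ‖z‖ := norm_pos_iff.mpr hz
        have h1 : Real.exp t < ‖z‖⁻¹ := by
          rw [Real.exp_neg] at hlt
          rw [lt_inv_comm₀ (Real.exp_pos t) hzpos]
          exact hlt
        have := (Real.lt_log_iff_exp_lt (by positivity : (0:ℝ) < ‖z‖⁻¹)).mpr h1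
        exact lt_max_of_lt_left this
    rw [this, measure_diff_null (measure_singleton _),
      Measure.addHaar_ball volume 0 (Real.exp_nonneg _), finrank_euclideanSpace_fin]
  rw [setLIntegral_congr_fun measurableSet_Ioi hset]
  have hbound : ∀ t ∈ Set.Ioi (0:ℝ),
      ENNReal.ofReal (Real.exp (-t) ^ n) ≤ ENNReal.ofReal (Real.exp (-t)) := by
    intro t ht
    exact ENNReal.ofReal_le_ofReal (pow_le_of_le_one (Real.exp_nonneg _)
      (Real.exp_le_one_iff.mpr (by simp; linarith [Set.mem_Ioi.mp ht])) hn.ne')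
  calc ∫⁻ t in Set.Ioi (0:ℝ), ENNReal.ofReal (Real.exp (-t) ^ n)
          * volume (Metric.ball (0 : EuclideanSpace ℝ (Fin n)) 1)
      ≤ ∫⁻ t in Set.Ioi (0:ℝ), ENNReal.ofReal (Real.exp (-t))
          * volume (Metric.ball (0 : EuclideanSpace ℝ (Fin n)) 1) :=
        setLIntegral_mono_ae (by fun_prop)
          (Eventually.of_forall (fun t ht => mul_le_mul_left (hbound t ht) _))
    _ = (∫⁻ t in Set.Ioi (0:ℝ), ENNReal.ofReal (Real.exp (-t)))
          * volume (Metric.ball (0 : EuclideanSpace ℝ (Fin n)) 1) := by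
        rw [lintegral_mul_const _ (by fun_prop)]
    _ < ⊤ := by
        apply ENNReal.mul_lt_top _ measure_ball_lt_top
        have : IntegrableOn (fun t : ℝ => Real.exp (-1 * t)) (Set.Ioi (0:ℝ)) volume :=
          exp_neg_integrableOn_Ioi 0 one_pos
        have h2 := this.lintegral_lt_top
        simpa using h2

private lemma ae_ne_point {n : ℕ} (hn : 0 < n) (c : EuclideanSpace ℝ (Fin n)) :
    ∀ᵐ y : EuclideanSpace ℝ (Fin n), y ≠ c := by
  haveI : Nontrivial (EuclideanSpace ℝ (Fin n)) :=
    Module.nontrivial_of_finrank_pos (R := ℝ) (by rw [finrank_euclideanSpace_fin]; exact hn)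
  rw [MeasureTheory.ae_iff]
  have : {y : EuclideanSpace ℝ (Fin n) | ¬ y ≠ c} = {c} := by ext z; simp [not_not]
  rw [this]; exact MeasureTheory.measure_singleton c

end AuxLemmas

set_option maxHeartbeats 1000000 in
/-- `(-v)⁺ ∈ L¹(ℝ^{2m})`. -/
theorem vAux_neg_part_integrable (m : ℕ) (hm : 1 ≤ m)
    (u : EuclideanSpace ℝ (Fin (2 * m)) → ℝ)
    (hu : IsSolution m (-((2 * m - 1).factorial : ℝ)) u) :
    Integrable (fun x => max (-(vAux m u x)) 0) := by
  obtain ⟨hu_smooth, -, hf⟩ := hu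
  have hdim : 0 < 2 * m := by omega
  set f : (EuclideanSpace ℝ (Fin (2 * m))) → ℝ := fun y => Real.exp (2 * (m : ℝ) * u y) with hfdef
  have hfc : Continuous f := Real.continuous_exp.comp (continuous_const.mul hu_smooth.continuous)
  have hfm : Measurable f := hfc.measurable
  have hfpos : ∀ y, 0 < f y := fun y => Real.exp_pos _
  set k : ℝ := ((2 * m - 1).factorial : ℝ) / gammaConst m with hk
  have hk0 : 0 ≤ k := by
    apply div_nonneg (Nat.cast_nonneg _)
    unfold gammaConst sphereVol
    positivity
  set V : ℝ := ∫ y, f y with hVdef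
  have hV0 : 0 < V := integral_exp_pos hf
  -- choose the radius R0
  have hUnion : (⋃ n : ℕ, Metric.closedBall (0 : (EuclideanSpace ℝ (Fin (2 * m)))) n) = Set.univ := by
    ext x
    simp only [Set.mem_iUnion, Metric.mem_closedBall, dist_zero_right, Set.mem_univ, iff_true]
    obtain ⟨n, hn⟩ := exists_nat_ge ‖x‖
    exact ⟨n, hn⟩
  have htend : Tendsto (fun n : ℕ => ∫ y in Metric.closedBall (0 : (EuclideanSpace ℝ (Fin (2 * m)))) n, f y) atTop (𝓝 V) := by
    have := tendsto_setIntegral_of_monotone (μ := volume) (f := f)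
      (s := fun n : ℕ => Metric.closedBall (0 : (EuclideanSpace ℝ (Fin (2 * m)))) n)
      (fun n => measurableSet_closedBall)
      (fun i j hij => Metric.closedBall_subset_closedBall (by exact_mod_cast hij))
      (by rw [hUnion]; exact hf.integrableOn)
    rw [hUnion] at this
    simpa using this
  have hev : ∀ᶠ n : ℕ in atTop,
      3 * V / 4 < (∫ y in Metric.closedBall (0 : (EuclideanSpace ℝ (Fin (2 * m)))) n, f y) ∧ 2 ≤ (n : ℝ) :=
    (htend.eventually_const_lt (by linarith)).and
      (tendsto_natCast_atTop_atTop.eventually_ge_atTop 2)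
  obtain ⟨n0, hn0⟩ := hev.exists
  set R0 : ℝ := (n0 : ℝ) with hR0def
  have hR0 : 2 ≤ R0 := hn0.2
  have hR0pos : (0 : ℝ) < R0 := by linarith
  have hlogR0 : 0 ≤ Real.log R0 := Real.log_nonneg (by linarith)
  set s : Set (EuclideanSpace ℝ (Fin (2 * m))) := Metric.closedBall 0 R0 with hsdef
  set M0 : ℝ := ∫ y in s, f y with hM0def
  set δ : ℝ := ∫ y in sᶜ, f y with hδdef
  have hsum : M0 + δ = V := integral_add_compl measurableSet_closedBall hf
  have hM0 : 3 * V / 4 < M0 := hn0.1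
  have hδ0 : 0 ≤ δ := setIntegral_nonneg measurableSet_closedBall.compl fun y _ => (hfpos y).le
  have hM00 : 0 ≤ M0 := by linarith
  have hδ : δ ≤ V / 4 := by linarith
  -- the log-singularity kernel
  set P : (EuclideanSpace ℝ (Fin (2 * m))) → ℝ := fun z => max (Real.log ‖z‖⁻¹) 0 with hPdef
  have hPint : Integrable P := integrable_logplus (2 * m) hdim
  have hPm : Measurable P := (Real.measurable_log.comp measurable_norm.inv).max measurable_const
  have hPnn : ∀ z, 0 ≤ P z := fun z => le_max_right _ _
  set CP : ℝ := ∫ z, P z with hCPdef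
  have hjm : Measurable (fun p : (EuclideanSpace ℝ (Fin (2 * m))) × (EuclideanSpace ℝ (Fin (2 * m))) => P (p.1 - p.2) * f p.2) :=
    (hPm.comp (measurable_fst.sub measurable_snd)).mul (hfm.comp measurable_snd)
  have JH : Integrable (fun p : (EuclideanSpace ℝ (Fin (2 * m))) × (EuclideanSpace ℝ (Fin (2 * m))) => P (p.1 - p.2) * f p.2)
      ((volume : Measure (EuclideanSpace ℝ (Fin (2 * m)))).prod (volume : Measure (EuclideanSpace ℝ (Fin (2 * m))))) := by
    rw [integrable_prod_iff' hjm.aestronglyMeasurable]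
    constructor
    · exact Eventually.of_forall fun y => (hPint.comp_sub_right y).mul_const (f y)
    · have heq : (fun y : (EuclideanSpace ℝ (Fin (2 * m))) => ∫ x, ‖P (x - y) * f y‖) = fun y => CP * f y := by
        funext y
        have : ∀ x : (EuclideanSpace ℝ (Fin (2 * m))), ‖P (x - y) * f y‖ = P (x - y) * f y := fun x => by
          rw [Real.norm_eq_abs, abs_of_nonneg (mul_nonneg (hPnn _) (hfpos y).le)]
        rw [show (fun x : (EuclideanSpace ℝ (Fin (2 * m))) => ‖P (x - y) * f y‖) = fun x => P (x - y) * f y from funext this]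
        rw [integral_mul_const, integral_sub_right_eq_self P y, mul_comm]
      rw [heq]
      exact hf.const_mul CP
  set H : (EuclideanSpace ℝ (Fin (2 * m))) → ℝ := fun x => ∫ y, P (x - y) * f y with hHdef
  have hHint : Integrable H := JH.integral_prod_left
  have hHnn : ∀ x, 0 ≤ H x :=
    fun x => integral_nonneg fun y => mul_nonneg (hPnn _) (hfpos y).le
  set W : (EuclideanSpace ℝ (Fin (2 * m))) → ℝ := fun x => if 2 * R0 ≤ ‖x‖ then -Real.log (‖x‖ / 2) else 0 with hWdef
  have hWm : Measurable W :=
    Measurable.ite (measurableSet_le measurable_const measurable_norm)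
      (Real.measurable_log.comp (measurable_norm.div_const 2)).neg measurable_const
  have hWnp : ∀ x, W x ≤ 0 := by
    intro x
    by_cases h : 2 * R0 ≤ ‖x‖
    · rw [hWdef]; simp only [if_pos h]
      have : (1:ℝ) ≤ ‖x‖ / 2 := by linarith
      simp only [neg_nonpos]
      exact Real.log_nonneg this
    · rw [hWdef]; simp only [if_neg h]; exact le_rfl
  set L : (EuclideanSpace ℝ (Fin (2 * m))) → ℝ := fun x =>
    M0 * (Real.log R0 + W x) + δ * Real.log (2 * (‖x‖ + 1)) with hLdef
  have hLm : Measurable L := by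
    apply Measurable.add
    · exact (measurable_const.add hWm).const_mul M0
    · exact (Real.measurable_log.comp ((measurable_norm.add_const 1).const_mul 2)).const_mul δ
  set C3 : ℝ := M0 * Real.log R0 + M0 * Real.log 2 + 2 * δ * Real.log 2 with hC3def
  set R1 : ℝ := max (2 * R0) (Real.exp (2 * C3 / V)) with hR1def
  have hR1 : 1 ≤ R1 := le_trans (by linarith) (le_max_left _ _)
  have hLneg : ∀ x : (EuclideanSpace ℝ (Fin (2 * m))), R1 ≤ ‖x‖ → L x ≤ 0 := by
    intro x hx
    have hx1 : 1 ≤ ‖x‖ := le_trans hR1 hx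
    have hx2 : 2 * R0 ≤ ‖x‖ := le_trans (le_max_left _ _) hx
    have hxpos : (0:ℝ) < ‖x‖ := by linarith
    have hWx : W x = -(Real.log ‖x‖ - Real.log 2) := by
      rw [hWdef]; simp only [if_pos hx2]
      rw [Real.log_div (by positivity) two_ne_zero]
    have hlog2 : Real.log (2 * (‖x‖ + 1)) ≤ Real.log 2 + (Real.log 2 + Real.log ‖x‖) := by
      rw [Real.log_mul two_ne_zero (by positivity)]
      have h1 : Real.log (‖x‖ + 1) ≤ Real.log (2 * ‖x‖) := Real.log_le_log (by linarith) (by linarith)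
      rw [Real.log_mul two_ne_zero (by positivity)] at h1
      linarith
    have hlogx0 : 0 ≤ Real.log ‖x‖ := Real.log_nonneg hx1
    have hlogx : 2 * C3 / V ≤ Real.log ‖x‖ := by
      have h := Real.log_le_log (Real.exp_pos _) (le_trans (le_max_right _ _) hx)
      rwa [Real.log_exp] at h
    have hcoef : V / 2 ≤ M0 - δ := by linarith
    have key : C3 ≤ (M0 - δ) * Real.log ‖x‖ := by
      have h1 : (V / 2) * (2 * C3 / V) ≤ (V / 2) * Real.log ‖x‖ :=
        mul_le_mul_of_nonneg_left hlogx (by linarith)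
      have h2 : (V / 2) * (2 * C3 / V) = C3 := by
        field_simp
      have h3 : (V / 2) * Real.log ‖x‖ ≤ (M0 - δ) * Real.log ‖x‖ :=
        mul_le_mul_of_nonneg_right hcoef hlogx0
      linarith
    rw [hLdef]
    dsimp only
    rw [hWx]
    have hδlog : δ * Real.log (2 * (‖x‖ + 1)) ≤ δ * (Real.log 2 + (Real.log 2 + Real.log ‖x‖)) :=
      mul_le_mul_of_nonneg_left hlog2 hδ0
    nlinarith [key, hδlog]
  set C4 : ℝ := M0 * Real.log R0 + δ * Real.log (2 * (R1 + 1)) with hC4def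
  have hlogR1 : 0 ≤ Real.log (2 * (R1 + 1)) := Real.log_nonneg (by linarith)
  have hC4 : 0 ≤ C4 := add_nonneg (mul_nonneg hM00 hlogR0) (mul_nonneg hδ0 hlogR1)
  have hLb : ∀ x : (EuclideanSpace ℝ (Fin (2 * m))), ‖x‖ ≤ R1 → L x ≤ C4 := by
    intro x hx
    have h1 : Real.log (2 * (‖x‖ + 1)) ≤ Real.log (2 * (R1 + 1)) :=
      Real.log_le_log (by positivity) (by nlinarith [norm_nonneg x])
    have h2 : δ * Real.log (2 * (‖x‖ + 1)) ≤ δ * Real.log (2 * (R1 + 1)) :=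
      mul_le_mul_of_nonneg_left h1 hδ0
    have h3 : M0 * (Real.log R0 + W x) ≤ M0 * Real.log R0 := by
      have := hWnp x
      nlinarith
    rw [hLdef, hC4def]
    dsimp only
    linarith
  have hLplus : Integrable (fun x : (EuclideanSpace ℝ (Fin (2 * m))) => max (L x) 0) := by
    have hg : Integrable ((Metric.closedBall (0 : (EuclideanSpace ℝ (Fin (2 * m)))) R1).indicator fun _ => C4) := by
      rw [integrable_indicator_iff measurableSet_closedBall]
      exact integrableOn_const measure_closedBall_lt_top.ne
    refine Integrable.mono' hg ((hLm.max measurable_const).aestronglyMeasurable)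
      (Eventually.of_forall fun x => ?_)
    rw [Real.norm_eq_abs, abs_of_nonneg (le_max_right _ _)]
    by_cases hx : ‖x‖ ≤ R1
    · rw [Set.indicator_of_mem (by simpa [Metric.mem_closedBall, dist_zero_right] using hx)]
      exact max_le (hLb x hx) hC4
    · rw [Set.indicator_of_notMem (by simpa [Metric.mem_closedBall, dist_zero_right] using hx)]
      exact max_le (hLneg x (le_of_not_ge hx)) le_rfl
  -- measurability of the potential
  set G : (EuclideanSpace ℝ (Fin (2 * m))) × (EuclideanSpace ℝ (Fin (2 * m))) → ℝ := fun p => Real.log (‖p.2‖ / ‖p.1 - p.2‖) * f p.2 with hGdef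
  have hGm : Measurable G :=
    (Real.measurable_log.comp ((measurable_norm.comp measurable_snd).div
      ((measurable_fst.sub measurable_snd).norm))).mul (hfm.comp measurable_snd)
  set A : (EuclideanSpace ℝ (Fin (2 * m))) → ℝ := fun x => ∫ y, G (x, y) with hAdef
  have hAm : StronglyMeasurable A := hGm.stronglyMeasurable.integral_prod_right'
  have hvA : ∀ x, vAux m u x = -k * A x := fun x => rfl
  refine Integrable.mono' ((hHint.add hLplus).const_mul k) ?_ ?_
  · have : (fun x => max (-(vAux m u x)) 0) = fun x => max (k * A x) 0 := by
      funext x; rw [hvA x]; ring_nf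
    rw [this]
    exact ((hAm.measurable.const_mul k).max measurable_const).aestronglyMeasurable
  · filter_upwards [JH.prod_right_ae] with x hx
    rw [Real.norm_eq_abs, abs_of_nonneg (le_max_right _ _), hvA x, neg_mul, neg_neg]
    have hRHS : 0 ≤ k * (H x + max (L x) 0) :=
      mul_nonneg hk0 (add_nonneg (hHnn x) (le_max_right _ _))
    rw [max_le_iff]
    refine ⟨?_, hRHS⟩
    by_cases hA : Integrable fun y => G (x, y)
    · set ψ : (EuclideanSpace ℝ (Fin (2 * m))) → ℝ := fun y =>
        P (x - y) + (if ‖y‖ ≤ R0 then Real.log R0 + W x else Real.log (2 * (‖x‖ + 1)))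
        with hψdef
      have hsy : ∀ y : (EuclideanSpace ℝ (Fin (2 * m))), y ∈ s ↔ ‖y‖ ≤ R0 := by
        intro y; rw [hsdef, Metric.mem_closedBall, dist_zero_right]
      have hind : (fun y : (EuclideanSpace ℝ (Fin (2 * m))) =>
            (if ‖y‖ ≤ R0 then Real.log R0 + W x else Real.log (2 * (‖x‖ + 1))) * f y)
          = fun y => s.indicator (fun y => (Real.log R0 + W x) * f y) y
              + sᶜ.indicator (fun y => Real.log (2 * (‖x‖ + 1)) * f y) y := by
        funext y
        by_cases hy : ‖y‖ ≤ R0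
        · have hy' : y ∈ s := (hsy y).mpr hy
          rw [if_pos hy, Set.indicator_of_mem hy', Set.indicator_of_notMem (by simpa using hy')]
          ring
        · have hy' : y ∉ s := fun h => hy ((hsy y).mp h)
          rw [if_neg hy, Set.indicator_of_notMem hy', Set.indicator_of_mem (by simpa using hy')]
          ring
      have h2int : Integrable (fun y : (EuclideanSpace ℝ (Fin (2 * m))) =>
          (if ‖y‖ ≤ R0 then Real.log R0 + W x else Real.log (2 * (‖x‖ + 1))) * f y) := by
        rw [hind]
        exact ((hf.const_mul _).indicator measurableSet_closedBall).add
          ((hf.const_mul _).indicator measurableSet_closedBall.compl)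
      have hψint : Integrable fun y => ψ y * f y := by
        have := hx.add h2int
        refine this.congr (Eventually.of_forall fun y => ?_)
        simp only [hψdef, Pi.add_apply]; ring
      have hψval : (∫ y, ψ y * f y) = H x + L x := by
        have hsplit : (fun y : (EuclideanSpace ℝ (Fin (2 * m))) => ψ y * f y) = fun y => P (x - y) * f y
            + (if ‖y‖ ≤ R0 then Real.log R0 + W x else Real.log (2 * (‖x‖ + 1))) * f y := by
          funext y; simp only [hψdef]; ring
        rw [hsplit, integral_add hx h2int]
        congr 1
        rw [hind, integral_add ((hf.const_mul _).indicator measurableSet_closedBall)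
          ((hf.const_mul _).indicator measurableSet_closedBall.compl),
          integral_indicator measurableSet_closedBall,
          integral_indicator measurableSet_closedBall.compl,
          integral_const_mul, integral_const_mul]
        rw [hLdef]
        dsimp only
        rw [← hM0def, ← hδdef]
        ring
      have hle : A x ≤ H x + L x := by
        rw [← hψval]
        refine integral_mono_ae hA hψint ?_
        filter_upwards [ae_ne_point hdim (0 : (EuclideanSpace ℝ (Fin (2 * m)))), ae_ne_point hdim x] with y hy0 hyx
        have hcore : Real.log (‖y‖ / ‖x - y‖) ≤ ψ y := by
          have hny : (0:ℝ) < ‖y‖ := norm_pos_iff.mpr hy0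
          have hnxy : (0:ℝ) < ‖x - y‖ := by
            rw [norm_pos_iff, sub_ne_zero]
            exact fun h => hyx h.symm
          rw [Real.log_div hny.ne' hnxy.ne']
          have hP1 : -Real.log ‖x - y‖ ≤ P (x - y) := by
            rw [hPdef]
            dsimp only
            rw [Real.log_inv]
            exact le_max_left _ _
          have hP0 : 0 ≤ P (x - y) := hPnn _
          rw [hψdef]
          dsimp only
          by_cases hyR : ‖y‖ ≤ R0
          · have hlogy : Real.log ‖y‖ ≤ Real.log R0 := Real.log_le_log hny hyR
            rw [if_pos hyR]
            by_cases hxR : 2 * R0 ≤ ‖x‖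
            · have hWx : W x = -Real.log (‖x‖ / 2) := by rw [hWdef]; simp only [if_pos hxR]
              have h1 : ‖x‖ / 2 ≤ ‖x - y‖ := by
                have h := norm_sub_norm_le x y
                linarith
              have h2 : Real.log (‖x‖ / 2) ≤ Real.log ‖x - y‖ :=
                Real.log_le_log (by linarith) h1
              rw [hWx]
              linarith
            · have hWx : W x = 0 := by rw [hWdef]; simp only [if_neg hxR]
              rw [hWx]
              linarith
          · rw [if_neg hyR]
            push_neg at hyR
            by_cases hy2 : ‖y‖ ≤ 2 * (‖x‖ + 1)
            · have : Real.log ‖y‖ ≤ Real.log (2 * (‖x‖ + 1)) := Real.log_le_log hny hy2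
              linarith
            · push_neg at hy2
              have hrev : ‖y - x‖ = ‖x - y‖ := norm_sub_rev y x
              have h1 : ‖y‖ / 2 ≤ ‖x - y‖ := by
                have h := norm_sub_norm_le y x
                rw [hrev] at h
                linarith [norm_nonneg x]
              have h2 : Real.log (‖y‖ / 2) ≤ Real.log ‖x - y‖ :=
                Real.log_le_log (by linarith) h1
              have h3 : Real.log (‖y‖ / 2) = Real.log ‖y‖ - Real.log 2 :=
                Real.log_div hny.ne' two_ne_zero
              have h4 : Real.log 2 ≤ Real.log (2 * (‖x‖ + 1)) :=
                Real.log_le_log two_pos (by nlinarith [norm_nonneg x])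
              linarith
        exact mul_le_mul_of_nonneg_right hcore (hfpos y).le
      calc k * A x ≤ k * (H x + L x) := mul_le_mul_of_nonneg_left hle hk0
        _ ≤ k * (H x + max (L x) 0) :=
          mul_le_mul_of_nonneg_left (add_le_add_right (le_max_left _ _) _) hk0
    · rw [show A x = 0 from integral_undef hA, mul_zero]
      exact hRHS
end

section
/- There is no smooth function u : ℝ² → ℝ satisfying Δu = 0 on ℝ² together with ∫_{ℝ²} e^{2u(x)} dx < +∞. -/
open MeasureTheory Real Filter Topology

section AuxProof

noncomputable def gfun (U : ℂ → ℝ) (z : ℂ) : ℂ :=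
  (fderiv ℝ U z 1 : ℂ) - (fderiv ℝ U z Complex.I : ℂ) * Complex.I

lemma clm_decomp (L : ℂ →L[ℝ] ℝ) (w : ℂ) : L w = w.re * L 1 + w.im * L Complex.I := by
  have hw : w = w.re • (1:ℂ) + w.im • Complex.I := by
    simp [Complex.real_smul, Complex.re_add_im]
  conv_lhs => rw [hw]
  rw [map_add, _root_.map_smul, _root_.map_smul, smul_eq_mul, smul_eq_mul]

theorem gfun_holo (U : ℂ → ℝ) (hU : ContDiff ℝ (⊤ : ℕ∞) U)
    (hharm : ∀ z, fderiv ℝ (fderiv ℝ U) z 1 1 + fderiv ℝ (fderiv ℝ U) z Complex.I Complex.I = 0) :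
    Differentiable ℂ (gfun U) := by
  intro z
  set B := fderiv ℝ (fderiv ℝ U) z with hB
  have hsymm : ∀ v w, B v w = B w v := by
    intro v w
    exact second_derivative_symmetric (f := U) (f' := fderiv ℝ U)
      (fun y => (hU.differentiable (by simp) y).hasFDerivAt)
      (((hU.fderiv_right (m := 1) ((by exact WithTop.coe_le_coe.mpr le_top))).differentiable one_ne_zero z).hasFDerivAt) v w
  have hD : HasFDerivAt (fderiv ℝ U) B z :=
    ((hU.fderiv_right (m := 1) (by exact WithTop.coe_le_coe.mpr le_top)).differentiable one_ne_zero z).hasFDerivAt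
  have h1 : HasFDerivAt (fun w => fderiv ℝ U w 1)
      ((ContinuousLinearMap.apply ℝ ℝ (1:ℂ)).comp B) z :=
    (ContinuousLinearMap.apply ℝ ℝ (1:ℂ)).hasFDerivAt.comp z hD
  have hI : HasFDerivAt (fun w => fderiv ℝ U w Complex.I)
      ((ContinuousLinearMap.apply ℝ ℝ (Complex.I)).comp B) z :=
    (ContinuousLinearMap.apply ℝ ℝ (Complex.I)).hasFDerivAt.comp z hD
  set a : ℝ := B 1 1 with ha
  set b : ℝ := B 1 Complex.I with hb
  have hg : HasFDerivAt (gfun U)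
      ((Complex.ofRealCLM.comp ((ContinuousLinearMap.apply ℝ ℝ (1:ℂ)).comp B))
        - (Complex.ofRealCLM.comp ((ContinuousLinearMap.apply ℝ ℝ (Complex.I)).comp B)).smulRight Complex.I) z := by
    have h1' := Complex.ofRealCLM.hasFDerivAt.comp z h1
    have hI' := Complex.ofRealCLM.hasFDerivAt.comp z hI
    have := h1'.sub (hI'.mul_const Complex.I)
    refine this.congr_fderiv (Eq.symm ?_)
    ext w
    simp [ContinuousLinearMap.smulRight_apply, smul_eq_mul, mul_comm]
  set c : ℂ := (a : ℂ) - (b : ℂ) * Complex.I with hc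
  have : HasFDerivAt (gfun U) (c • (ContinuousLinearMap.id ℂ ℂ)) z := by
    apply hasFDerivAt_of_restrictScalars ℝ hg
    ext w
    have hII : B Complex.I Complex.I = -a := by
      have := hharm z; rw [← hB] at this; linarith
    have hB1 : B w 1 = w.re * a + w.im * b := by
      rw [hsymm w 1, clm_decomp (B 1) w]
    have hBI : B w Complex.I = w.re * b - w.im * a := by
      rw [hsymm w Complex.I, clm_decomp (B Complex.I) w, hsymm Complex.I 1, hII]
      ring
    have hL : (ContinuousLinearMap.restrictScalars ℝ (c • ContinuousLinearMap.id ℂ ℂ)) w = c * w := rfl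
    simp only [hL, ContinuousLinearMap.sub_apply, ContinuousLinearMap.comp_apply,
      ContinuousLinearMap.smulRight_apply, ContinuousLinearMap.apply_apply,
      Complex.ofRealCLM_apply, smul_eq_mul]
    rw [hB1, hBI, hc]
    simp [Complex.ext_iff]
    constructor <;> ring
  exact this.differentiableAt

lemma circleIntegral_zero {g : ℂ → ℂ} (hg : Differentiable ℂ g) {r : ℝ} (hr : 0 < r) :
    (∮ z in C(0, r), g z) = 0 := by
  have h1 : DiffContOnCl ℂ (fun z => z • g z) (Metric.ball (0:ℂ) r) :=
    (differentiable_id.smul hg).diffContOnCl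
  have h2 := h1.circleIntegral_sub_inv_smul (Metric.mem_ball_self hr)
  simp only [smul_eq_mul, zero_mul, mul_zero, smul_zero] at h2
  calc (∮ z in C(0, r), g z) = ∮ z in C(0, r), (z - 0)⁻¹ * (z * g z) := by
        apply circleIntegral.integral_congr hr.le
        intro z hz
        have hz0 : z ≠ 0 := by
          intro h
          rw [Metric.mem_sphere, h] at hz
          simp at hz
          exact hr.ne hz
        field_simp
        rw [sub_zero]
    _ = 0 := h2

theorem mean_value (U : ℂ → ℝ) (hU : ContDiff ℝ (⊤ : ℕ∞) U)
    (hharm : ∀ z, fderiv ℝ (fderiv ℝ U) z 1 1 + fderiv ℝ (fderiv ℝ U) z Complex.I Complex.I = 0)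
    {r : ℝ} (hr : 0 ≤ r) :
    ∫ θ in (0:ℝ)..(2*π), U (circleMap 0 r θ) = 2 * π * U 0 := by
  have hg := gfun_holo U hU hharm
  have hUc : Continuous U := hU.continuous
  have hUd : Differentiable ℝ U := hU.differentiable (by simp)
  have hDc : Continuous (fderiv ℝ U) := hU.continuous_fderiv (by simp)
  set φ : ℝ → ℝ := fun r => ∫ θ in (0:ℝ)..(2*π), U (circleMap 0 r θ) with hφ
  set ψ : ℝ → ℝ := fun r => ∫ θ in (0:ℝ)..(2*π),
      fderiv ℝ U (circleMap 0 r θ) (Complex.exp (θ * Complex.I)) with hψ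
  have hderiv : ∀ r₀ : ℝ, HasDerivAt φ (ψ r₀) r₀ := by
    intro r₀
    obtain ⟨M, hM⟩ : ∃ M, ∀ z ∈ Metric.closedBall (0:ℂ) (|r₀| + 1), ‖fderiv ℝ U z‖ ≤ M :=
      (isCompact_closedBall _ _).exists_bound_of_continuousOn hDc.continuousOn
    have key := intervalIntegral.hasDerivAt_integral_of_dominated_loc_of_deriv_le
      (F := fun r θ => U (circleMap 0 r θ))
      (F' := fun r θ => fderiv ℝ U (circleMap 0 r θ) (Complex.exp (θ * Complex.I)))
      (a := (0:ℝ)) (b := 2*π) (x₀ := r₀) (bound := fun _ => M) (s := Metric.ball r₀ 1) (μ := volume) (Metric.ball_mem_nhds r₀ one_pos)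
      ?_ ?_ ?_ ?_ ?_ ?_
    · exact key.2
    · exact Eventually.of_forall fun r =>
        ((hUc.comp (continuous_circleMap 0 r)).aestronglyMeasurable).restrict
    · exact ((hUc.comp (continuous_circleMap 0 r₀))).intervalIntegrable _ _
    · apply Continuous.aestronglyMeasurable ?_ |>.restrict
      have : Continuous fun θ : ℝ => (fderiv ℝ U (circleMap 0 r₀ θ),
          Complex.exp (θ * Complex.I)) :=
        (hDc.comp (continuous_circleMap 0 r₀)).prodMk
          (Complex.continuous_exp.comp (Complex.continuous_ofReal.mul continuous_const))
      exact isBoundedBilinearMap_apply.continuous.comp this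
    · apply Eventually.of_forall
      intro θ _ r hrball
      have h1 : ‖circleMap 0 r θ‖ ≤ |r₀| + 1 := by
        rw [norm_circleMap_zero]
        have h2 : |r - r₀| < 1 := by simpa [Real.dist_eq] using hrball
        have := abs_sub_abs_le_abs_sub r r₀
        linarith
      calc ‖fderiv ℝ U (circleMap 0 r θ) (Complex.exp (θ * Complex.I))‖
          ≤ ‖fderiv ℝ U (circleMap 0 r θ)‖ * ‖Complex.exp (θ * Complex.I)‖ :=
            ContinuousLinearMap.le_opNorm _ _
        _ ≤ M := by
            rw [Complex.norm_exp_ofReal_mul_I, mul_one]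
            exact hM _ (by simpa [Metric.mem_closedBall] using h1)
    · exact intervalIntegrable_const
    · apply Eventually.of_forall
      intro θ _ r _
      have hc : HasDerivAt (fun s : ℝ => circleMap 0 s θ) (Complex.exp (θ * Complex.I)) r := by
        simp only [circleMap, zero_add]
        simpa using (Complex.ofRealCLM.hasDerivAt (x := r)).mul_const (Complex.exp (θ * Complex.I))
      exact ((hUd _).hasFDerivAt.comp_hasDerivAt r hc)
  have hψ0 : ∀ s : ℝ, 0 ≤ s → ψ s = 0 := by
    intro s hs
    rcases eq_or_lt_of_le hs with h | h
    · subst h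
      have h0 : ψ 0 = ∫ θ in (0:ℝ)..(2*π),
          (Real.cos θ * fderiv ℝ U 0 1 + Real.sin θ * fderiv ℝ U 0 Complex.I) := by
        apply intervalIntegral.integral_congr
        intro θ _
        dsimp only
        rw [show circleMap 0 0 θ = 0 by simp [circleMap]]
        rw [clm_decomp]
        simp [Complex.exp_ofReal_mul_I_re, Complex.exp_ofReal_mul_I_im]
      rw [h0, intervalIntegral.integral_add, intervalIntegral.integral_mul_const,
          intervalIntegral.integral_mul_const, integral_cos,
          integral_sin]
      · simp [Real.sin_two_pi, Real.cos_two_pi]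
      · exact (Continuous.intervalIntegrable (by continuity) _ _)
      · exact (Continuous.intervalIntegrable (by continuity) _ _)
    · have hC := circleIntegral_zero hg h
      rw [circleIntegral] at hC
      have hC2 : ∫ θ in (0:ℝ)..(2*π), Complex.exp (θ * Complex.I) * gfun U (circleMap 0 s θ) = 0 := by
        have heq : ∀ θ ∈ Set.uIcc (0:ℝ) (2*π),
            deriv (circleMap 0 s) θ • gfun U (circleMap 0 s θ)
            = ((s : ℂ) * Complex.I) * (Complex.exp (θ * Complex.I) * gfun U (circleMap 0 s θ)) := by
          intro θ _
          rw [deriv_circleMap]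
          simp only [circleMap, zero_add, smul_eq_mul]
          ring
        rw [intervalIntegral.integral_congr heq, intervalIntegral.integral_const_mul] at hC
        have hne : ((s:ℂ) * Complex.I) ≠ 0 := by
          simp [Complex.ext_iff, h.ne']
        exact (mul_eq_zero.mp hC).resolve_left hne
      have hint : IntervalIntegrable (fun θ : ℝ =>
          Complex.exp (θ * Complex.I) * gfun U (circleMap 0 s θ)) volume 0 (2*π) := by
        apply Continuous.intervalIntegrable
        apply Continuous.mul
        · exact Complex.continuous_exp.comp (Complex.continuous_ofReal.mul continuous_const)
        · unfold gfun
          exact ((Complex.continuous_ofReal.comp (isBoundedBilinearMap_apply.continuous.comp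
              ((hDc.comp (continuous_circleMap 0 s)).prodMk continuous_const))).sub
            ((Complex.continuous_ofReal.comp (isBoundedBilinearMap_apply.continuous.comp
              ((hDc.comp (continuous_circleMap 0 s)).prodMk continuous_const))).mul continuous_const))
      have hre := Complex.reCLM.intervalIntegral_comp_comm hint
      rw [hC2] at hre
      simp only [Complex.reCLM_apply, Complex.zero_re] at hre
      have hfinal : ψ s = ∫ θ in (0:ℝ)..(2*π),
          (Complex.exp (θ * Complex.I) * gfun U (circleMap 0 s θ)).re := by
        apply intervalIntegral.integral_congr
        intro θ _
        dsimp only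
        rw [clm_decomp (fderiv ℝ U (circleMap 0 s θ)) (Complex.exp (θ * Complex.I))]
        simp only [Complex.mul_re, gfun, Complex.sub_re, Complex.ofReal_re, Complex.mul_re,
          Complex.ofReal_im, Complex.I_re, Complex.I_im, Complex.sub_im, Complex.mul_im,
          Complex.exp_ofReal_mul_I_re, Complex.exp_ofReal_mul_I_im]
        ring
      rw [hfinal, hre]
  have hconst := constant_of_has_deriv_right_zero (f := φ) (a := 0) (b := r)
    (fun x _ => ((hderiv x).continuousAt).continuousWithinAt)
    (fun x hx => by
      have h := hderiv x
      rw [hψ0 x hx.1] at h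
      exact h.hasDerivWithinAt)
  have hval := hconst r (by constructor <;> [exact hr; exact le_rfl])
  show φ r = 2 * π * U 0
  rw [hval]
  have : φ 0 = ∫ θ in (0:ℝ)..(2*π), U 0 := by
    apply intervalIntegral.integral_congr
    intro θ _
    dsimp only
    rw [show circleMap 0 0 θ = 0 by simp [circleMap]]
  rw [this]
  simp [mul_comm]

theorem main_complex (U : ℂ → ℝ) (hU : ContDiff ℝ (⊤ : ℕ∞) U)
    (hharm : ∀ z, fderiv ℝ (fderiv ℝ U) z 1 1 + fderiv ℝ (fderiv ℝ U) z Complex.I Complex.I = 0)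
    (hint : Integrable (fun z => Real.exp (2 * U z))) : False := by
  have hUc : Continuous U := hU.continuous
  set f : ℂ → ℝ := fun z => Real.exp (2 * U z) with hf
  have hfc : Continuous f := Real.continuous_exp.comp (continuous_const.mul hUc)
  have hfpos : ∀ z, 0 < f z := fun z => Real.exp_pos _
  have hcirc : ∀ r : ℝ, 0 ≤ r →
      2 * π * Real.exp (2 * U 0) ≤ ∫ θ in (0:ℝ)..(2*π), f (circleMap 0 r θ) := by
    intro r hr
    have hmv := mean_value U hU hharm hr
    have hlow : ∀ θ : ℝ, Real.exp (2 * U 0) * (1 + (2 * U (circleMap 0 r θ) - 2 * U 0))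
        ≤ f (circleMap 0 r θ) := by
      intro θ
      have h1 := Real.add_one_le_exp (2 * U (circleMap 0 r θ) - 2 * U 0)
      have h2 : f (circleMap 0 r θ) = Real.exp (2 * U 0) *
          Real.exp (2 * U (circleMap 0 r θ) - 2 * U 0) := by
        simp only [hf]; rw [← Real.exp_add]; ring_nf
      rw [h2]
      have := Real.exp_pos (2 * U 0)
      nlinarith
    have hmono : ∫ θ in (0:ℝ)..(2*π),
        Real.exp (2 * U 0) * (1 + (2 * U (circleMap 0 r θ) - 2 * U 0))
        ≤ ∫ θ in (0:ℝ)..(2*π), f (circleMap 0 r θ) := by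
      apply intervalIntegral.integral_mono_on (by positivity)
      · exact Continuous.intervalIntegrable (by
          exact continuous_const.mul ((continuous_const.add ((continuous_const.mul
            (hUc.comp (continuous_circleMap 0 r))).sub continuous_const)))) _ _
      · exact (hfc.comp (continuous_circleMap 0 r)).intervalIntegrable _ _
      · exact fun θ _ => hlow θ
    refine le_trans (le_of_eq ?_) hmono
    have hUint : IntervalIntegrable (fun θ => U (circleMap 0 r θ)) volume 0 (2*π) :=
      (hUc.comp (continuous_circleMap 0 r)).intervalIntegrable _ _
    rw [intervalIntegral.integral_const_mul]
    have : ∫ θ in (0:ℝ)..(2*π), (1 + (2 * U (circleMap 0 r θ) - 2 * U 0))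
        = (2*π) + (2 * (2 * π * U 0) - 2*π*(2 * U 0)) := by
      rw [intervalIntegral.integral_add intervalIntegrable_const
        ((hUint.const_mul 2).sub intervalIntegrable_const),
        intervalIntegral.integral_sub (hUint.const_mul 2) intervalIntegrable_const,
        intervalIntegral.integral_const_mul, hmv]
      simp
      ring
    rw [this]
    ring_nf
  set S : ℝ := ∫ z, f z with hS
  have hS0 : 0 ≤ S := integral_nonneg (fun z => (hfpos z).le)
  have hball : ∀ R : ℝ, 0 < R → π * R^2 * Real.exp (2 * U 0) ≤ S := by
    intro R hR
    set fR : ℂ → ℝ := (Metric.closedBall (0:ℂ) R).indicator f with hfR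
    have hfRint : Integrable fR := hint.indicator measurableSet_closedBall
    have hfRle : ∀ z, fR z ≤ f z := fun z =>
      Set.indicator_le_self' (fun y _ => (hfpos y).le) z
    have hfRnn : ∀ z, 0 ≤ fR z := fun z => Set.indicator_nonneg (fun y _ => (hfpos y).le) z
    have hstep1 : ∫ z, fR z ≤ S := integral_mono hfRint hint hfRle
    have hpolar := Complex.integral_comp_polarCoord_symm fR
    set G : ℝ × ℝ → ℝ := fun p => p.1 • fR (Complex.polarCoord.symm p) with hG
    have hsymm_cont : Continuous (fun p : ℝ × ℝ => (Complex.polarCoord.symm p : ℂ)) := by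
      have : (fun p : ℝ × ℝ => (Complex.polarCoord.symm p : ℂ))
          = fun p => (p.1 : ℂ) * ((Real.cos p.2 : ℂ) + (Real.sin p.2 : ℂ) * Complex.I) :=
        funext Complex.polarCoord_symm_apply
      rw [this]
      exact (Complex.continuous_ofReal.comp continuous_fst).mul
        ((Complex.continuous_ofReal.comp (Real.continuous_cos.comp continuous_snd)).add
          ((Complex.continuous_ofReal.comp (Real.continuous_sin.comp continuous_snd)).mul
            continuous_const))
    have hfRmeas : Measurable fR := hfc.measurable.indicator measurableSet_closedBall
    have hGmeas : AEStronglyMeasurable G volume := by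
      apply Measurable.aestronglyMeasurable
      exact measurable_fst.smul ((hfRmeas.comp hsymm_cont.measurable))
    have htarget : polarCoord.target = Set.Ioi (0:ℝ) ×ˢ Set.Ioo (-π) π := rfl
    have htmeas : MeasurableSet polarCoord.target := polarCoord.open_target.measurableSet
    have habs : ∀ p : ℝ × ℝ, ‖Complex.polarCoord.symm p‖ = |p.1| :=
      Complex.norm_polarCoord_symm
    obtain ⟨MF, hMF⟩ : ∃ MF, ∀ z ∈ Metric.closedBall (0:ℂ) R, ‖f z‖ ≤ MF :=
      (isCompact_closedBall _ _).exists_bound_of_continuousOn hfc.continuousOn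
    have hMF0 : 0 ≤ MF := le_trans (norm_nonneg _) (hMF 0 (by simp [hR.le]))
    have hfRbd : ∀ z, ‖fR z‖ ≤ MF := by
      intro z
      rw [hfR]
      by_cases hz : z ∈ Metric.closedBall (0:ℂ) R
      · rw [Set.indicator_of_mem hz]; exact hMF z hz
      · rw [Set.indicator_of_notMem hz]; simpa using hMF0
    set T1 : Set (ℝ × ℝ) := Set.Ioc (0:ℝ) R ×ˢ Set.Ioo (-π) π with hT1
    have hT1meas : MeasurableSet T1 := measurableSet_Ioc.prod measurableSet_Ioo
    have hT1fin : volume T1 ≠ ⊤ := by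
      rw [hT1, Measure.volume_eq_prod, Measure.prod_prod, Real.volume_Ioc, Real.volume_Ioo]
      exact ENNReal.mul_ne_top ENNReal.ofReal_ne_top ENNReal.ofReal_ne_top
    have hGT1 : IntegrableOn G T1 := by
      apply Measure.integrableOn_of_bounded hT1fin hGmeas
      apply ae_restrict_of_forall_mem hT1meas
      intro p hp
      rw [hT1] at hp
      have hnorm : ‖G p‖ = |p.1| * ‖fR (Complex.polarCoord.symm p)‖ := by
        rw [hG]; simp [abs_mul]
      rw [hnorm]
      apply mul_le_mul _ (hfRbd _) (norm_nonneg _) hR.le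
      rw [abs_of_pos hp.1.1]; exact hp.1.2
    have hGzero : ∀ p ∈ polarCoord.target \ T1, G p = 0 := by
      intro p hp
      obtain ⟨hpt, hpn⟩ := hp
      rw [htarget] at hpt
      obtain ⟨hp1, hp2⟩ := hpt
      have hp1R : R < p.1 := by
        by_contra hle
        exact hpn (by rw [hT1]; exact ⟨⟨hp1, not_lt.mp hle⟩, hp2⟩)
      have hz : fR (Complex.polarCoord.symm p) = 0 := by
        rw [hfR]
        apply Set.indicator_of_notMem
        simp only [Metric.mem_closedBall, dist_zero_right, habs p, not_le]
        rw [abs_of_pos (lt_trans hR hp1R)]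
        exact hp1R
      rw [hG]; dsimp only; rw [hz, smul_zero]
    have hGtarget : IntegrableOn G polarCoord.target := by
      have h1 : IntegrableOn G (polarCoord.target \ T1) := by
        rw [integrableOn_congr_fun hGzero (htmeas.diff hT1meas)]
        exact integrableOn_zero
      exact (hGT1.union h1).mono_set (fun p hp => by
        by_cases h : p ∈ T1
        · exact Set.mem_union_left _ h
        · exact Set.mem_union_right _ ⟨hp, h⟩)
    have hGnn : 0 ≤ᵐ[volume.restrict polarCoord.target] G := by
      apply ae_restrict_of_forall_mem htmeas
      intro p hp
      rw [htarget] at hp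
      exact mul_nonneg (le_of_lt hp.1) (hfRnn _)
    set rect : Set (ℝ × ℝ) := Set.Ioo (0:ℝ) R ×ˢ Set.Ioo (-π) π with hrect
    have hrectsub : rect ⊆ polarCoord.target := by
      rw [htarget, hrect]
      exact Set.prod_mono (fun x hx => hx.1) (fun x hx => hx)
    have hGrect : IntegrableOn G rect := hGtarget.mono_set hrectsub
    have hmono2 : ∫ p in rect, G p ≤ ∫ p in polarCoord.target, G p :=
      setIntegral_mono_set hGtarget hGnn (HasSubset.Subset.eventuallyLE hrectsub)
    have hGrect' : IntegrableOn G (Set.Ioo (0:ℝ) R ×ˢ Set.Ioo (-π) π) (volume.prod volume) := by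
      rw [← Measure.volume_eq_prod]; rw [hrect] at hGrect; exact hGrect
    have hfub0 := setIntegral_prod G hGrect'
    have hfub : ∫ p in rect, G p
        = ∫ r in Set.Ioo (0:ℝ) R, ∫ θ in Set.Ioo (-π) π, G (r, θ) := by
      rw [hrect, Measure.volume_eq_prod]
      exact hfub0
    have hinner : ∀ r ∈ Set.Ioo (0:ℝ) R,
        2 * π * Real.exp (2 * U 0) * r ≤ ∫ θ in Set.Ioo (-π) π, G (r, θ) := by
      intro r hr
      have hGval : ∀ θ : ℝ, G (r, θ) = r * f (circleMap 0 r θ) := by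
        intro θ
        have hmem : Complex.polarCoord.symm (r, θ) ∈ Metric.closedBall (0:ℂ) R := by
          simp only [Metric.mem_closedBall, dist_zero_right, habs]
          rw [abs_of_pos hr.1]
          exact hr.2.le
        have hcm : circleMap 0 r θ = Complex.polarCoord.symm (r, θ) := by
          rw [Complex.polarCoord_symm_apply]
          simp [circleMap, Complex.exp_mul_I]
        rw [hG]
        simp only [smul_eq_mul]
        rw [hfR, Set.indicator_of_mem hmem, hcm]
      have hper : Function.Periodic (fun θ => f (circleMap 0 r θ)) (2*π) :=
        (periodic_circleMap 0 r).comp f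
      have hshift := hper.intervalIntegral_add_eq (-π) 0
      rw [zero_add] at hshift
      rw [show -π + 2*π = π by ring] at hshift
      have h1 : ∫ θ in Set.Ioo (-π) π, G (r, θ)
          = r * ∫ θ in (0:ℝ)..(2*π), f (circleMap 0 r θ) := by
        rw [setIntegral_congr_fun measurableSet_Ioo (fun θ _ => hGval θ)]
        rw [integral_const_mul]
        congr 1
        rw [← integral_Ioc_eq_integral_Ioo,
          ← intervalIntegral.integral_of_le (by linarith [Real.pi_pos] : -π ≤ π), hshift]
      rw [h1]
      have := hcirc r hr.1.le
      calc 2 * π * Real.exp (2 * U 0) * r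
          = r * (2 * π * Real.exp (2 * U 0)) := by ring
        _ ≤ r * ∫ θ in (0:ℝ)..(2*π), f (circleMap 0 r θ) :=
            mul_le_mul_of_nonneg_left this hr.1.le
    have houter_int : IntegrableOn (fun r => ∫ θ in Set.Ioo (-π) π, G (r, θ))
        (Set.Ioo (0:ℝ) R) := by
      have h2 : Integrable G ((volume.restrict (Set.Ioo (0:ℝ) R)).prod
          (volume.restrict (Set.Ioo (-π) π))) := by
        rw [Measure.prod_restrict]; exact hGrect'
      exact h2.integral_prod_left
    have hlhs_int : IntegrableOn (fun r : ℝ => 2 * π * Real.exp (2 * U 0) * r)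
        (Set.Ioo (0:ℝ) R) := by
      apply ((continuous_const.mul continuous_id).integrableOn_Icc (a := 0) (b := R)).mono_set
      exact Set.Ioo_subset_Icc_self
    have hcomp : ∫ r in Set.Ioo (0:ℝ) R, 2 * π * Real.exp (2 * U 0) * r
        ≤ ∫ r in Set.Ioo (0:ℝ) R, ∫ θ in Set.Ioo (-π) π, G (r, θ) :=
      setIntegral_mono_on hlhs_int houter_int measurableSet_Ioo hinner
    have hval : ∫ r in Set.Ioo (0:ℝ) R, 2 * π * Real.exp (2 * U 0) * r
        = π * R^2 * Real.exp (2 * U 0) := by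
      rw [integral_const_mul, ← integral_Ioc_eq_integral_Ioo,
        ← intervalIntegral.integral_of_le hR.le, integral_id]
      ring
    calc π * R^2 * Real.exp (2 * U 0)
        = ∫ r in Set.Ioo (0:ℝ) R, 2 * π * Real.exp (2 * U 0) * r := hval.symm
      _ ≤ ∫ r in Set.Ioo (0:ℝ) R, ∫ θ in Set.Ioo (-π) π, G (r, θ) := hcomp
      _ = ∫ p in rect, G p := hfub.symm
      _ ≤ ∫ p in polarCoord.target, G p := hmono2
      _ = ∫ z, fR z := hpolar
      _ ≤ S := hstep1
  set K := π * Real.exp (2 * U 0) with hK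
  have hKpos : 0 < K := by positivity
  have hfin := hball (Real.sqrt (S / K) + 1) (by positivity)
  have hsq : Real.sqrt (S / K) ^ 2 = S / K := Real.sq_sqrt (by positivity)
  have hrw : π * (Real.sqrt (S / K) + 1) ^ 2 * Real.exp (2 * U 0)
      = K * (Real.sqrt (S / K) + 1) ^ 2 := by rw [hK]; ring
  rw [hrw] at hfin
  have hKS : K * (S / K) = S := by field_simp
  nlinarith [Real.sqrt_nonneg (S / K)]

end AuxProof

/-- no smooth harmonic function on `ℝ²` has `e^{2u} ∈ L¹`. -/
theorem no_harmonic_dim_two :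
    ¬ ∃ u : EuclideanSpace ℝ (Fin 2) → ℝ, ContDiff ℝ (⊤ : ℕ∞) u ∧
      (∀ x, lap u x = 0) ∧
      Integrable (fun x => Real.exp (2 * u x)) := by
  rintro ⟨u, hu, hlap, hI⟩
  set e : ℂ ≃ₗᵢ[ℝ] EuclideanSpace ℝ (Fin 2) := Complex.orthonormalBasisOneI.repr with he
  set eq : ℂ ≃L[ℝ] EuclideanSpace ℝ (Fin 2) := e.toContinuousLinearEquiv with heq
  have hecoe : (⇑e : ℂ → EuclideanSpace ℝ (Fin 2)) = ⇑eq := rfl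
  set U : ℂ → ℝ := fun z => u (e z) with hUdef
  have hUsmooth : ContDiff ℝ (⊤ : ℕ∞) U := hu.comp (eq.toContinuousLinearMap.contDiff)
  -- basis images
  have he1 : e 1 = EuclideanSpace.single (0 : Fin 2) (1:ℝ) := by
    apply PiLp.ext
    intro i
    fin_cases i <;> simp [he, Complex.orthonormalBasisOneI_repr_apply, EuclideanSpace.single]
  have heI : e Complex.I = EuclideanSpace.single (1 : Fin 2) (1:ℝ) := by
    apply PiLp.ext
    intro i
    fin_cases i <;> simp [he, Complex.orthonormalBasisOneI_repr_apply, EuclideanSpace.single]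
  -- second derivative transfer
  have hud : Differentiable ℝ u := hu.differentiable (by simp)
  have hud2 : Differentiable ℝ (fderiv ℝ u) := (hu.fderiv_right (m := 1) (by exact WithTop.coe_le_coe.mpr le_top)).differentiable one_ne_zero
  set Φ : (EuclideanSpace ℝ (Fin 2) →L[ℝ] ℝ) →L[ℝ] (ℂ →L[ℝ] ℝ) :=
    (ContinuousLinearMap.compL ℝ ℂ (EuclideanSpace ℝ (Fin 2)) ℝ).flip eq.toContinuousLinearMap with hΦ
  have hstep1 : fderiv ℝ U = fun z => Φ (fderiv ℝ u (eq z)) := by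
    funext z
    have : fderiv ℝ (u ∘ ⇑eq) z = (fderiv ℝ u (eq z)).comp (eq : ℂ →L[ℝ] EuclideanSpace ℝ (Fin 2)) :=
      eq.comp_right_fderiv
    rw [hUdef]
    simp only [hecoe]
    rw [show (fun z => u (eq z)) = u ∘ ⇑eq from rfl, this]
    rfl
  have hD2 : ∀ (z v w : ℂ), fderiv ℝ (fderiv ℝ U) z v w
      = fderiv ℝ (fderiv ℝ u) (eq z) (eq v) (eq w) := by
    intro z v w
    rw [hstep1]
    have h1 : fderiv ℝ ((fun x => Φ (fderiv ℝ u x)) ∘ ⇑eq) z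
        = (fderiv ℝ (fun x => Φ (fderiv ℝ u x)) (eq z)).comp (eq : ℂ →L[ℝ] EuclideanSpace ℝ (Fin 2)) :=
      eq.comp_right_fderiv
    have h2 : fderiv ℝ (fun x => Φ (fderiv ℝ u x)) (eq z)
        = Φ.comp (fderiv ℝ (fderiv ℝ u) (eq z)) := by
      exact (Φ.hasFDerivAt.comp (eq z) (hud2 (eq z)).hasFDerivAt).fderiv
    rw [show (fun z => Φ (fderiv ℝ u (eq z))) = (fun x => Φ (fderiv ℝ u x)) ∘ ⇑eq from rfl,
      h1, h2]
    simp [hΦ]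
  -- harmonicity
  have hharm : ∀ z, fderiv ℝ (fderiv ℝ U) z 1 1
      + fderiv ℝ (fderiv ℝ U) z Complex.I Complex.I = 0 := by
    intro z
    have := hlap (eq z)
    rw [lap] at this
    rw [Fin.sum_univ_two] at this
    rw [iteratedFDeriv_two_apply, iteratedFDeriv_two_apply] at this
    simp only [Matrix.cons_val_zero, Matrix.cons_val_one, Matrix.head_cons] at this
    rw [hD2, hD2]
    rw [hecoe] at he1 heI
    rw [he1, heI]
    exact this
  -- integrability
  have hint : Integrable (fun z => Real.exp (2 * U z)) := by
    have hmp : MeasurePreserving (⇑e) volume volume :=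
      Complex.orthonormalBasisOneI.measurePreserving_repr
    have hemb : MeasurableEmbedding (⇑e) :=
      eq.toHomeomorph.measurableEmbedding
    exact (hmp.integrable_comp_emb hemb).mpr hI
  exact main_complex U hUsmooth hharm hint
end

section
/- Let n ≥ 1 be an integer and let q : ℝ^n → ℝ be the evaluation of a nonzero real polynomial in n variables. Then the Hausdorff dimension of the zero set V := {x ∈ ℝ^n : q(x) = 0} is at most n-1. -/
open MeasureTheory Real Filter Topology
open scoped NNReal ENNReal

namespace DimHAux

open Set Module


open MvPolynomial

variable {n : ℕ}

lemma contDiff_evalFun (q : MvPolynomial (Fin n) ℝ) :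
    ContDiff ℝ (⊤ : ℕ∞) (fun x : EuclideanSpace ℝ (Fin n) => eval (fun i => x i) q) := by
  induction q using MvPolynomial.induction_on with
  | C a => simpa using contDiff_const
  | add p q hp hq => simpa using hp.add hq
  | mul_X p i hp =>
    simp only [eval_mul, eval_X]
    exact hp.mul (by fun_prop)

lemma hasDerivAt_eval_line (q : MvPolynomial (Fin n) ℝ) (i : Fin n) (x : Fin n → ℝ) (s : ℝ) :
    HasDerivAt (fun t : ℝ => eval (fun j => x j + t * Pi.single (M := fun _ => ℝ) i 1 j) q)
      (eval (fun j => x j + s * Pi.single (M := fun _ => ℝ) i 1 j) (pderiv i q)) s := by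
  induction q using MvPolynomial.induction_on with
  | C a => simpa using hasDerivAt_const s a
  | add p q hp hq =>
    simp only [eval_add, map_add]
    exact hp.add hq
  | mul_X p j hp =>
    have h2 : HasDerivAt (fun t : ℝ => x j + t * Pi.single (M := fun _ => ℝ) i 1 j)
        (Pi.single (M := fun _ => ℝ) i 1 j) s :=
      (hasDerivAt_mul_const _).const_add (x j)
    have h3 := hp.mul h2
    simp only [eval_mul, eval_X, map_mul] at h3 ⊢
    rw [pderiv_mul, eval_add, eval_mul, eval_mul, eval_X, pderiv_X]
    have he : (eval fun j => x j + s * Pi.single (M := fun _ => ℝ) i 1 j)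
        (Pi.single (M := fun _ => MvPolynomial (Fin n) ℝ) i 1 j)
        = Pi.single (M := fun _ => ℝ) i 1 j := by
      rcases eq_or_ne i j with h | h
      · subst h; simp
      · simp [Pi.single_eq_of_ne (Ne.symm h)]
    rw [he]
    exact h3

/-- The fderiv of the evaluation map in the direction of the `i`-th basis vector is the
evaluation of the partial derivative. -/
lemma fderiv_evalFun_single (q : MvPolynomial (Fin n) ℝ) (i : Fin n)
    (x : EuclideanSpace ℝ (Fin n)) :
    fderiv ℝ (fun y : EuclideanSpace ℝ (Fin n) => eval (fun j => y j) q) x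
        (EuclideanSpace.single i 1)
      = eval (fun j => x j) (pderiv i q) := by
  set F : EuclideanSpace ℝ (Fin n) → ℝ := fun y => eval (fun j => y j) q with hF
  have hdF : HasFDerivAt F (fderiv ℝ F x) x :=
    ((contDiff_evalFun q).differentiable (by simp)).differentiableAt.hasFDerivAt
  set v : EuclideanSpace ℝ (Fin n) := EuclideanSpace.single i 1 with hv
  have hγ : HasDerivAt (fun t : ℝ => x + t • v) v 0 := by
    simpa using ((hasDerivAt_id (0:ℝ)).smul_const v).const_add x
  have hcomp : HasDerivAt (fun t : ℝ => F (x + t • v)) (fderiv ℝ F x v) 0 := by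
    have hdF' : HasFDerivAt F (fderiv ℝ F x) (x + (0:ℝ) • v) := by simpa using hdF
    exact hdF'.comp_hasDerivAt 0 hγ
  have hline := hasDerivAt_eval_line q i (fun j => x j) 0
  have hfun : (fun t : ℝ => eval (fun j => x j + t * Pi.single (M := fun _ => ℝ) i 1 j) q)
      = fun t : ℝ => F (x + t • v) := by
    funext t
    congr 1
  rw [hfun] at hline
  have h4 := hcomp.unique hline
  simp only [zero_mul, add_zero] at h4
  exact h4


/-- Near a point where a map to `ℝ` has nonzero strict derivative, the level set has Hausdorff
dimension at most `finrank ℝ E - 1`. -/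
lemma local_dimH_levelSet {E : Type*} [NormedAddCommGroup E] [NormedSpace ℝ E]
    [FiniteDimensional ℝ E] {f : E → ℝ} {f' : E →L[ℝ] ℝ} {a : E}
    (hf : HasStrictFDerivAt f f' a) (h0 : f' ≠ 0) :
    ∃ U ∈ 𝓝 a, dimH {x ∈ U | f x = f a} ≤ (finrank ℝ E : ℝ≥0∞) - 1 := by
  haveI : CompleteSpace E := FiniteDimensional.complete ℝ E
  obtain ⟨v, hv⟩ : ∃ v, f' v ≠ 0 := by
    by_contra h
    push_neg at h
    exact h0 (ContinuousLinearMap.ext fun w => by simp [h w])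
  have hr : f'.range = ⊤ := by
    rw [LinearMap.range_eq_top]
    intro y
    exact ⟨(y / f' v) • v, by simp [hv]⟩
  set φ := hf.implicitToOpenPartialHomeomorph f f' hr with hφ
  set g := hf.implicitFunction f f' hr (f a) with hg
  have hgs : HasStrictFDerivAt g (LinearMap.ker (f' : E →ₗ[ℝ] ℝ)).subtypeL 0 := hf.to_implicitFunction hr
  obtain ⟨K, T, hT, hgl⟩ := hgs.exists_lipschitzOnWith
  have hsnd : ContinuousAt (fun x => (φ x).2) a :=
    continuous_snd.continuousAt.comp
      (φ.continuousAt (hf.mem_implicitToOpenPartialHomeomorph_source hr))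
  have hφa : φ a = (f a, 0) := hf.implicitToOpenPartialHomeomorph_self hr
  have hT' : (fun x => (φ x).2) ⁻¹' T ∈ 𝓝 a := by
    apply hsnd.preimage_mem_nhds
    rw [hφa]
    exact hT
  have hev : {x | hf.implicitFunction f f' hr (f x) (φ x).2 = x} ∈ 𝓝 a :=
    hf.eq_implicitFunction hr
  refine ⟨((fun x => (φ x).2) ⁻¹' T) ∩ {x | hf.implicitFunction f f' hr (f x) (φ x).2 = x},
    Filter.inter_mem hT' hev, ?_⟩
  have hsub : {x ∈ ((fun x => (φ x).2) ⁻¹' T) ∩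
      {x | hf.implicitFunction f f' hr (f x) (φ x).2 = x} | f x = f a} ⊆ g '' T := by
    rintro x ⟨⟨hx1, hx2⟩, hx3⟩
    refine ⟨(φ x).2, hx1, ?_⟩
    rw [hg, ← hx3]
    exact hx2
  have hk : finrank ℝ (LinearMap.ker (f' : E →ₗ[ℝ] ℝ)) = finrank ℝ E - 1 := by
    have h1 := LinearMap.finrank_range_add_finrank_ker (f' : E →ₗ[ℝ] ℝ)
    have h2 : LinearMap.range (f' : E →ₗ[ℝ] ℝ) = ⊤ := hr
    have h3 : LinearMap.ker (f' : E →ₗ[ℝ] ℝ) = LinearMap.ker (f' : E →ₗ[ℝ] ℝ) := rfl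
    rw [h2, h3, finrank_top, finrank_self] at h1
    omega
  calc dimH {x ∈ ((fun x => (φ x).2) ⁻¹' T) ∩
        {x | hf.implicitFunction f f' hr (f x) (φ x).2 = x} | f x = f a}
      ≤ dimH (g '' T) := dimH_mono hsub
    _ ≤ dimH T := hgl.dimH_image_le
    _ ≤ dimH (univ : Set (LinearMap.ker (f' : E →ₗ[ℝ] ℝ))) := dimH_mono (subset_univ _)
    _ = (finrank ℝ (LinearMap.ker (f' : E →ₗ[ℝ] ℝ)) : ℝ≥0∞) := Real.dimH_univ_eq_finrank _
    _ = ((finrank ℝ E - 1 : ℕ) : ℝ≥0∞) := by rw [hk]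
    _ = (finrank ℝ E : ℝ≥0∞) - 1 := by
        rw [ENNReal.natCast_sub, Nat.cast_one]


lemma exists_pderiv_ne_zero (q : MvPolynomial (Fin n) ℝ) (h0 : q.totalDegree ≠ 0) :
    ∃ i, pderiv i q ≠ 0 ∧ (pderiv i q).totalDegree < q.totalDegree := by
  have hq : q ≠ 0 := fun h => h0 (h ▸ totalDegree_zero)
  -- find a monomial with a variable occurring
  have : ¬ ∀ (m : Fin n →₀ ℕ) (_ : m ∈ q.support) (x : Fin n), m x = 0 :=
    fun h => h0 ((totalDegree_eq_zero_iff (Fin n) q).2 h)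
  push_neg at this
  obtain ⟨s, hs, i, hsi⟩ := this
  refine ⟨i, ?_, ?_⟩
  · -- nonvanishing via the coefficient at s - single i 1
    have hrep : pderiv i q
        = ∑ v ∈ q.support, monomial (v - Finsupp.single i 1) (coeff v q * (v i : ℝ)) := by
      conv_lhs => rw [q.as_sum]
      rw [map_sum]
      exact Finset.sum_congr rfl fun v _ => pderiv_monomial
    have hcoeff : coeff (s - Finsupp.single i 1) (pderiv i q) = coeff s q * (s i : ℝ) := by
      rw [hrep, coeff_sum]
      rw [Finset.sum_eq_single s]
      · rw [coeff_monomial, if_pos rfl]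
      · intro v hv hvs
        rw [coeff_monomial]
        rcases Nat.eq_zero_or_pos (v i) with h | h
        · simp [h]
        · rw [if_neg]
          intro hE
          apply hvs
          have h1 : Finsupp.single i 1 ≤ v := Finsupp.single_le_iff.2 h
          have h2 : Finsupp.single i 1 ≤ s := Finsupp.single_le_iff.2 (by omega)
          calc v = v - Finsupp.single i 1 + Finsupp.single i 1 := (tsub_add_cancel_of_le h1).symm
            _ = s - Finsupp.single i 1 + Finsupp.single i 1 := by rw [hE]
            _ = s := tsub_add_cancel_of_le h2
      · intro h; exact absurd hs h
    rw [ne_zero_iff]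
    refine ⟨s - Finsupp.single i 1, ?_⟩
    rw [hcoeff]
    exact mul_ne_zero (mem_support_iff.1 hs) (Nat.cast_ne_zero.2 hsi)
  · -- degree drop
    have hrep : pderiv i q
        = ∑ v ∈ q.support, monomial (v - Finsupp.single i 1) (coeff v q * (v i : ℝ)) := by
      conv_lhs => rw [q.as_sum]
      rw [map_sum]
      exact Finset.sum_congr rfl fun v _ => pderiv_monomial
    rw [hrep]
    have hle : ∀ v ∈ q.support,
        (monomial (v - Finsupp.single i 1) (coeff v q * (v i : ℝ))).totalDegree
          ≤ q.totalDegree - 1 := by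
      intro v hv
      rcases Nat.eq_zero_or_pos (v i) with h | h
      · simp [h]
      · refine (totalDegree_monomial_le _ _).trans ?_
        show ((v - Finsupp.single i 1).sum fun _ e => e) ≤ q.totalDegree - 1
        have h1 : Finsupp.single i 1 ≤ v := Finsupp.single_le_iff.2 h
        have hsum : ((v - Finsupp.single i 1).sum fun _ e => e) + 1 = v.sum fun _ e => e := by
          have := tsub_add_cancel_of_le h1
          calc ((v - Finsupp.single i 1).sum fun _ e => e) + 1
              = ((v - Finsupp.single i 1).sum fun _ e => e)
                + ((Finsupp.single i 1).sum fun _ e => e) := by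
                rw [Finsupp.sum_single_index]; rfl
            _ = ((v - Finsupp.single i 1) + Finsupp.single i 1).sum fun _ e => e := by
                rw [Finsupp.sum_add_index' (fun _ => rfl) (fun _ _ _ => rfl)]
            _ = v.sum fun _ e => e := by rw [this]
        have hvle : (v.sum fun _ e => e) ≤ q.totalDegree := le_totalDegree hv
        omega
    calc (∑ v ∈ q.support,
          monomial (v - Finsupp.single i 1) (coeff v q * (v i : ℝ))).totalDegree
        ≤ q.support.sup fun v =>
            (monomial (v - Finsupp.single i 1) (coeff v q * (v i : ℝ))).totalDegree :=
          totalDegree_finset_sum _ _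
      _ ≤ q.totalDegree - 1 := Finset.sup_le hle
      _ < q.totalDegree := by omega

lemma eval_const_ne_zero (q : MvPolynomial (Fin n) ℝ) (h0 : q.totalDegree = 0) (hq : q ≠ 0)
    (x : Fin n → ℝ) : eval x q ≠ 0 := by
  have hmem : ∀ m ∈ q.support, m = 0 := by
    intro m hm
    have := (totalDegree_eq_zero_iff (Fin n) q).1 h0 m hm
    ext j
    exact this j
  have hsupp : q.support = {0} := by
    obtain ⟨m, hm⟩ := support_nonempty.2 hq
    have h1 : q.support ⊆ {0} := fun m hm => Finset.mem_singleton.2 (hmem m hm)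
    refine Finset.Subset.antisymm h1 ?_
    intro v hv
    rw [Finset.mem_singleton] at hv
    rw [hv, ← hmem m hm]
    exact hm
  rw [eval_eq, hsupp, Finset.sum_singleton]
  simp only [Finsupp.support_zero, Finset.prod_empty, mul_one]
  have : (0 : Fin n →₀ ℕ) ∈ q.support := by rw [hsupp]; exact Finset.mem_singleton_self _
  exact mem_support_iff.1 this


lemma main_induction (n : ℕ) (d : ℕ) :
    ∀ q : MvPolynomial (Fin n) ℝ, q.totalDegree ≤ d → q ≠ 0 →
      dimH {x : EuclideanSpace ℝ (Fin n) | eval (fun i => x i) q = 0} ≤ (n : ℝ≥0∞) - 1 := by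
  induction d with
  | zero =>
    intro q hdeg hq
    have h0 : q.totalDegree = 0 := Nat.le_zero.1 hdeg
    have : {x : EuclideanSpace ℝ (Fin n) | eval (fun i => x i) q = 0} = ∅ := by
      ext x
      simp only [mem_setOf_eq, mem_empty_iff_false, iff_false]
      exact eval_const_ne_zero q h0 hq _
    rw [this, dimH_empty]
    exact zero_le
  | succ d ih =>
    intro q hdeg hq
    by_cases h0 : q.totalDegree = 0
    · have : {x : EuclideanSpace ℝ (Fin n) | eval (fun i => x i) q = 0} = ∅ := by
        ext x
        simp only [mem_setOf_eq, mem_empty_iff_false, iff_false]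
        exact eval_const_ne_zero q h0 hq _
      rw [this, dimH_empty]
      exact zero_le
    · obtain ⟨i, hne, hlt⟩ := exists_pderiv_ne_zero q h0
      have hIH := ih (pderiv i q) (by omega) hne
      set F : EuclideanSpace ℝ (Fin n) → ℝ := fun x => eval (fun j => x j) q with hFdef
      set G : EuclideanSpace ℝ (Fin n) → ℝ := fun x => eval (fun j => x j) (pderiv i q)
        with hGdef
      set M : Set (EuclideanSpace ℝ (Fin n)) := {x | F x = 0 ∧ G x ≠ 0} with hMdef
      have hsub : {x : EuclideanSpace ℝ (Fin n) | F x = 0} ⊆ {x | G x = 0} ∪ M := by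
        intro x hx
        by_cases hGx : G x = 0
        · exact Or.inl hGx
        · exact Or.inr ⟨hx, hGx⟩
      refine le_trans (dimH_mono hsub) ?_
      rw [dimH_union]
      refine max_le hIH ?_
      -- cover M by countably many good neighborhoods
      have key : ∀ x ∈ M, ∃ U, U ∈ 𝓝 x ∧ dimH {y ∈ U | F y = 0} ≤ (n : ℝ≥0∞) - 1 := by
        intro x hx
        have hF : ContDiff ℝ (⊤ : ℕ∞) F := contDiff_evalFun q
        have hstrict : HasStrictFDerivAt F (fderiv ℝ F x) x :=
          (hF.contDiffAt).hasStrictFDerivAt (by simp)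
        have hne' : fderiv ℝ F x ≠ 0 := by
          intro hzero
          apply hx.2
          rw [hGdef]
          simp only
          rw [← fderiv_evalFun_single q i x, hzero]
          rfl
        obtain ⟨U, hU, hdim⟩ := local_dimH_levelSet hstrict hne'
        refine ⟨U, hU, ?_⟩
        rw [hx.1] at hdim
        calc dimH {y ∈ U | F y = 0} ≤ (finrank ℝ (EuclideanSpace ℝ (Fin n)) : ℝ≥0∞) - 1 := hdim
          _ = (n : ℝ≥0∞) - 1 := by rw [finrank_euclideanSpace_fin]
      choose! U hU hdim using key
      obtain ⟨t, htM, htc, hcov⟩ := TopologicalSpace.countable_cover_nhdsWithin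
        (f := U) (s := M) (fun x hx => mem_nhdsWithin_of_mem_nhds (hU x hx))
      have hMsub : M ⊆ ⋃ x ∈ t, {y ∈ U x | F y = 0} := by
        intro y hy
        obtain ⟨x, hx, hyx⟩ := mem_iUnion₂.1 (hcov hy)
        exact mem_iUnion₂.2 ⟨x, hx, hyx, hy.1⟩
      refine le_trans (dimH_mono hMsub) ?_
      rw [dimH_bUnion htc]
      exact iSup₂_le fun x hx => hdim x (htM hx)

end DimHAux

/-- the zero set of a nonzero real polynomial in `n` variables has
Hausdorff dimension at most `n - 1`. -/
theorem dimH_zero_set_polynomial (n : ℕ) (hn : 1 ≤ n)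
    (q : MvPolynomial (Fin n) ℝ) (hq : q ≠ 0) :
    dimH {x : EuclideanSpace ℝ (Fin n) | MvPolynomial.eval (fun i => x i) q = 0} ≤
      ((n : ℝ≥0∞) - 1) :=
  DimHAux.main_induction n q.totalDegree q le_rfl hq
end
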